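/- arXiv:1607.04859 — 4 statements merged into one kernel-verified Lean document; each statement's English description precedes it below -/
import Mathlib

section
/- Almost surely, limsup_{t→0⁺} B_t/√t = ∞ for a standard Brownian motion B started at 0. -/
open MeasureTheory ProbabilityTheory

/-- A standard Brownian motion started at `0`. -/
structure IsBrownianMotion {Ω : Type*} [MeasurableSpace Ω] (P : Measure Ω)
    (B : ℝ → Ω → ℝ) : Prop where
  isProb : IsProbabilityMeasure P
  start : ∀ᵐ ω ∂P, B 0 ω = 0
  cont : ∀ᵐ ω ∂P, Continuous fun t => B t ω
  meas : ∀ t, Measurable (B t)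
  incr : ∀ s t : ℝ, 0 ≤ s → s ≤ t →
    P.map (fun ω => B t ω - B s ω) = gaussianReal 0 (Real.toNNReal (t - s))
  indep : ∀ (n : ℕ) (ts : Fin (n + 1) → ℝ), Monotone ts → (∀ i, 0 ≤ ts i) →
    iIndepFun
      (fun i : Fin n => fun ω => B (ts i.succ) ω - B (ts i.castSucc) ω) P

/-!
Sample `B` at the times `tₙ = 16⁻ⁿ` and let `cₙ = √(log (n + 1))`. The normalized increments
`(B tₙ - B tₙ₊₁) / √(tₙ - tₙ₊₁)` are independent standard Gaussians, and a standard Gaussian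
exceeds `cₙ` with probability at least a constant times `1 / (n + 1)`, which is not summable:
by the second Borel–Cantelli lemma the increment exceeds `cₙ` infinitely often. On the other
hand `B tₙ₊₁ ≤ -2 cₙ √tₙ₊₁` has probability at most `(n + 1)⁻²`, so by the first Borel–Cantelli
lemma this eventually fails. Since `√(tₙ - tₙ₊₁) ≥ 3 √tₙ / 4` and `√tₙ₊₁ = √tₙ / 4`, this gives
`B tₙ / √tₙ ≥ cₙ / 4` infinitely often, and `cₙ → ∞`.
-/

open Filter Set Real Topology
open scoped NNReal ENNReal

namespace ProbabilityTheory

variable {Ω : Type*} [MeasurableSpace Ω] {P : Measure Ω}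

lemma hasSubgaussianMGF_id_gaussianReal (v : ℝ≥0) :
    HasSubgaussianMGF id v (gaussianReal 0 v) where
  integrable_exp_mul t := integrable_exp_mul_gaussianReal t
  mgf_le t := by simp [mgf_id_gaussianReal]

lemma HasLaw.measureReal_le_neg_le_of_gaussianReal {Z : Ω → ℝ} {v : ℝ≥0}
    (hZ : HasLaw Z (gaussianReal 0 v) P) {ε : ℝ} (hε : 0 ≤ ε) :
    P.real {ω | Z ω ≤ -ε} ≤ exp (-ε ^ 2 / (2 * v)) := by
  have hsub : HasSubgaussianMGF Z v P :=
    (HasSubgaussianMGF.id_map_iff hZ.aemeasurable).1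
      (hZ.map_eq ▸ hasSubgaussianMGF_id_gaussianReal v)
  simpa only [Pi.neg_apply, le_neg] using hsub.neg.measure_ge_le hε

lemma HasLaw.div_sqrt_of_gaussianReal {X : Ω → ℝ} {v : ℝ≥0}
    (hX : HasLaw X (gaussianReal 0 v) P) (hv : v ≠ 0) :
    HasLaw (fun ω => X ω / √v) (gaussianReal 0 1) P := by
  convert gaussianReal_div_const hX √v using 2
  · simp
  · ext
    simp [Real.sq_sqrt v.coe_nonneg, hv]

lemma gaussianPDFReal_add_one_le_measureReal_Ici {c : ℝ} (hc : 0 ≤ c) :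
    gaussianPDFReal 0 1 (c + 1) ≤ (gaussianReal 0 1).real (Ici c) := by
  have hIcc : (gaussianReal 0 1).real (Icc c (c + 1)) =
      ∫ x in Icc c (c + 1), gaussianPDFReal 0 1 x := by
    rw [measureReal_def, gaussianReal_apply_eq_integral _ one_ne_zero, ENNReal.toReal_ofReal
      (setIntegral_nonneg measurableSet_Icc fun x _ => gaussianPDFReal_nonneg _ _ _)]
  have hpdf : ∀ x ∈ Icc c (c + 1), gaussianPDFReal 0 1 (c + 1) ≤ gaussianPDFReal 0 1 x := by
    intro x hx
    simp only [gaussianPDFReal, NNReal.coe_one, mul_one, sub_zero]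
    gcongr
    · exact hc.trans hx.1
    · exact hx.2
  calc gaussianPDFReal 0 1 (c + 1)
      ≤ ∫ x in Icc c (c + 1), gaussianPDFReal 0 1 x := by
        simpa using setIntegral_ge_of_const_le measurableSet_Icc (by simp) hpdf
          (integrable_gaussianPDFReal 0 1).integrableOn
    _ = (gaussianReal 0 1).real (Icc c (c + 1)) := hIcc.symm
    _ ≤ (gaussianReal 0 1).real (Ici c) := measureReal_mono Icc_subset_Ici_self

lemma iIndepFun.iIndepSet_preimage {ι β : Type*} [MeasurableSpace β] {Y : ι → Ω → β}
    (h : iIndepFun Y P) {S : ι → Set β} (hS : ∀ i, MeasurableSet (S i)) :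
    iIndepSet (fun i => Y i ⁻¹' S i) P := by
  rw [iIndepSet_iff_iIndep]
  refine iIndep_of_iIndep_of_le ((iIndepFun_iff_iIndep _ _ _).1 h) fun i => ?_
  exact MeasurableSpace.generateFrom_le fun _ hs => hs ▸ ⟨S i, hS i, rfl⟩

lemma iIndepSet.ae_frequently_mem_of_not_summable {s : ℕ → Set Ω} (hs : iIndepSet s P)
    (hsm : ∀ n, MeasurableSet (s n)) (hsum : ¬ Summable fun n => P.real (s n)) :
    ∀ᵐ ω ∂P, ∃ᶠ n in atTop, ω ∈ s n := by
  have := hs.isProbabilityMeasure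
  have htop : ∑' n, P (s n) = ∞ := by
    by_contra hne
    exact hsum ((ENNReal.summable_toReal hne).congr fun n => rfl)
  have hone : P (limsup s atTop) = P univ := by
    rw [measure_limsup_eq_one hsm hs htop, measure_univ]
  filter_upwards [(ae_iff_measure_eq
    (MeasurableSet.measurableSet_limsup hsm).nullMeasurableSet).2 hone] with ω hω
  exact mem_limsup_iff_frequently_mem.1 hω

end ProbabilityTheory

lemma MeasureTheory.ae_eventually_notMem_of_summable_measureReal {α : Type*} [MeasurableSpace α]
    {μ : Measure α} [IsFiniteMeasure μ] {s : ℕ → Set α} (hs : Summable fun n => μ.real (s n)) :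
    ∀ᵐ x ∂μ, ∀ᶠ n in atTop, x ∉ s n :=
  ae_eventually_notMem <| by
    simpa only [ofReal_measureReal (measure_ne_top μ _)] using hs.tsum_ofReal_ne_top

lemma EReal.limsup_coe_eq_top_of_frequently {α : Type*} {l : Filter α} {f : α → ℝ}
    {u : ℕ → α} (hu : Tendsto u atTop l) {g : ℕ → ℝ} (hg : Tendsto g atTop atTop)
    (h : ∃ᶠ n in atTop, g n ≤ f (u n)) : limsup (fun x => (f x : EReal)) l = ⊤ := by
  refine EReal.eq_top_iff_forall_lt _ |>.2 fun M => ?_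
  have hfreq : ∃ᶠ n in atTop, ((M + 1 : ℝ) : EReal) ≤ f (u n) :=
    (h.and_eventually (hg.eventually_ge_atTop (M + 1))).mono fun n hn =>
      EReal.coe_le_coe_iff.2 (hn.2.trans hn.1)
  have hfreq_l : ∃ᶠ x in l, ((M + 1 : ℝ) : EReal) ≤ f x :=
    (frequently_map (P := fun x => ((M + 1 : ℝ) : EReal) ≤ f x).2 hfreq).filter_mono hu
  exact (EReal.coe_lt_coe_iff.2 (lt_add_one M)).trans_le (le_limsup_of_frequently_le' hfreq_l)

namespace BrownianLimsup

noncomputable def sampleTime (n : ℕ) : ℝ := (16 ^ n)⁻¹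

noncomputable def threshold (n : ℕ) : ℝ := √(Real.log (n + 1))

lemma sampleTime_pos (n : ℕ) : 0 < sampleTime n := by unfold sampleTime; positivity

lemma sixteen_mul_sampleTime_succ (n : ℕ) : 16 * sampleTime (n + 1) = sampleTime n := by
  simp only [sampleTime, pow_succ, mul_inv]
  field_simp

lemma sampleTime_succ_lt (n : ℕ) : sampleTime (n + 1) < sampleTime n := by
  have := sampleTime_pos (n + 1)
  linarith [sixteen_mul_sampleTime_succ n]

lemma sampleTime_antitone : Antitone sampleTime :=
  antitone_nat_of_succ_le fun n => (sampleTime_succ_lt n).le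

lemma tendsto_sampleTime : Tendsto sampleTime atTop (𝓝[>] 0) := by
  refine tendsto_nhdsWithin_iff.2 ⟨?_, Eventually.of_forall sampleTime_pos⟩
  have h : Tendsto (fun n : ℕ => ((16 : ℝ) ^ n)⁻¹) atTop (𝓝 0) := by
    simpa only [inv_pow] using
      tendsto_pow_atTop_nhds_zero_of_lt_one (by norm_num : (0 : ℝ) ≤ 16⁻¹) (by norm_num)
  exact h

lemma threshold_nonneg (n : ℕ) : 0 ≤ threshold n := Real.sqrt_nonneg _

lemma exp_neg_threshold_sq (n : ℕ) : exp (-threshold n ^ 2) = ((n : ℝ) + 1)⁻¹ := by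
  rw [threshold, Real.sq_sqrt (Real.log_nonneg (by simp)), exp_neg, exp_log (by positivity)]

lemma le_gaussianReal_real_Ici_threshold (n : ℕ) :
    (√(2 * π))⁻¹ * exp (-1) * ((n : ℝ) + 1)⁻¹ ≤ (gaussianReal 0 1).real (Ici (threshold n)) := by
  calc (√(2 * π))⁻¹ * exp (-1) * ((n : ℝ) + 1)⁻¹
      = (√(2 * π))⁻¹ * exp (-1 - threshold n ^ 2) := by
        rw [sub_eq_add_neg, exp_add, exp_neg_threshold_sq, mul_assoc]
    _ ≤ gaussianPDFReal 0 1 (threshold n + 1) := by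
        simp only [gaussianPDFReal, NNReal.coe_one, mul_one, sub_zero]
        gcongr
        nlinarith [sq_nonneg (threshold n - 1)]
    _ ≤ (gaussianReal 0 1).real (Ici (threshold n)) :=
        gaussianPDFReal_add_one_le_measureReal_Ici (threshold_nonneg n)

lemma not_summable_gaussianReal_Ici_threshold :
    ¬ Summable fun n => (gaussianReal 0 1).real (Ici (threshold n)) := by
  intro h
  have hK : 0 < (√(2 * π))⁻¹ * exp (-1) := by positivity
  have hinv : Summable fun n : ℕ => ((n : ℝ) + 1)⁻¹ := by
    have := (h.of_nonneg_of_le (fun n => by positivity) le_gaussianReal_real_Ici_threshold).mul_left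
      ((√(2 * π))⁻¹ * exp (-1))⁻¹
    simpa only [← mul_assoc, inv_mul_cancel₀ hK.ne', one_mul] using this
  exact Real.not_summable_natCast_inv ((summable_nat_add_iff 1).1 (by exact_mod_cast hinv))

lemma tendsto_threshold : Tendsto threshold atTop atTop :=
  tendsto_sqrt_atTop.comp <| tendsto_log_atTop.comp <|
    tendsto_atTop_add_const_right _ _ tendsto_natCast_atTop_atTop

lemma div_four_le_div_sqrt {x y c s t : ℝ} (hs : 0 < s) (hst : 16 * s = t) (hc : 0 ≤ c)
    (hx : c ≤ (x - y) / √(t - s)) (hy : -(2 * c) < y / √s) : c / 4 ≤ x / √t := by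
  have hss := Real.sqrt_pos.2 hs
  have ht : √t = 4 * √s := by
    rw [← hst, Real.sqrt_mul (by norm_num), show (16 : ℝ) = 4 ^ 2 by norm_num,
      Real.sqrt_sq (by norm_num)]
  have hts : 3 * √s ≤ √(t - s) := by
    rw [← Real.sqrt_sq (by norm_num : (0 : ℝ) ≤ 3), ← Real.sqrt_mul (by norm_num)]
    exact Real.sqrt_le_sqrt (by linarith)
  rw [le_div_iff₀ ((by positivity : 0 < 3 * √s).trans_le hts)] at hx
  rw [lt_div_iff₀ hss] at hy
  rw [ht, le_div_iff₀ (by positivity)]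
  nlinarith

end BrownianLimsup

namespace IsBrownianMotion

open BrownianLimsup

variable {Ω : Type*} [MeasurableSpace Ω] {P : Measure Ω} {B : ℝ → Ω → ℝ}

lemma hasLaw_sub (hB : IsBrownianMotion P B) {s t : ℝ} (hs : 0 ≤ s) (hst : s ≤ t) :
    HasLaw (fun ω => B t ω - B s ω) (gaussianReal 0 (t - s).toNNReal) P :=
  ⟨((hB.meas t).sub (hB.meas s)).aemeasurable, hB.incr s t hs hst⟩

lemma hasLaw_sub_div_sqrt (hB : IsBrownianMotion P B) {s t : ℝ} (hs : 0 ≤ s) (hst : s < t) :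
    HasLaw (fun ω => (B t ω - B s ω) / √(t - s)) (gaussianReal 0 1) P := by
  have h := (hB.hasLaw_sub hs hst.le).div_sqrt_of_gaussianReal (by simpa using hst)
  rwa [Real.coe_toNNReal _ (sub_nonneg.2 hst.le)] at h

lemma hasLaw_div_sqrt (hB : IsBrownianMotion P B) {t : ℝ} (ht : 0 < t) :
    HasLaw (fun ω => B t ω / √t) (gaussianReal 0 1) P := by
  refine (hB.hasLaw_sub_div_sqrt le_rfl ht).congr ?_
  filter_upwards [hB.start] with ω h0
  simp [h0]

lemma iIndepFun_sub_of_antitone (hB : IsBrownianMotion P B) {t : ℕ → ℝ} (ht : Antitone t)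
    (ht0 : ∀ n, 0 ≤ t n) : iIndepFun (fun n ω => B (t n) ω - B (t (n + 1)) ω) P := by
  refine iIndepFun_iff_finset.2 fun s => ?_
  obtain ⟨N, hN⟩ : ∃ N, ∀ n ∈ s, n < N :=
    ⟨s.sup id + 1, fun n hn => Nat.lt_succ_of_le (s.le_sup (f := id) hn)⟩
  -- restricted to `s`, the family is the reindexing `n ↦ N - 1 - n` of the increments
  -- along the increasing times `t N ≤ … ≤ t 0`
  have hY := hB.indep N (fun i => t (N - i)) (fun i j hij => ht (by omega)) fun i => ht0 _
  have hg : Function.Injective fun n : s => (⟨N - 1 - n, by have := hN n n.2; omega⟩ : Fin N) := by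
    intro m n hmn
    have := hN m m.2; have := hN n n.2
    exact Subtype.ext (by simp only [Fin.mk.injEq] at hmn; omega)
  convert hY.precomp hg using 1
  ext n ω
  have := hN n n.2
  simp only [Finset.restrict, Fin.val_succ, Fin.val_castSucc]
  congr 3 <;> omega

lemma ae_frequently_threshold_le_increment (hB : IsBrownianMotion P B) :
    ∀ᵐ ω ∂P, ∃ᶠ n in atTop, threshold n ≤
      (B (sampleTime n) ω - B (sampleTime (n + 1)) ω) / √(sampleTime n - sampleTime (n + 1)) := by
  have hind := (hB.iIndepFun_sub_of_antitone sampleTime_antitone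
    fun n => (sampleTime_pos n).le).comp
    (fun n x => x / √(sampleTime n - sampleTime (n + 1))) fun n => measurable_id.div_const _
  refine (hind.iIndepSet_preimage (S := fun n => Ici (threshold n)) fun n => measurableSet_Ici)
    |>.ae_frequently_mem_of_not_summable (fun n => ?_) fun hsum => ?_
  · exact (((hB.meas _).sub (hB.meas _)).div_const _) measurableSet_Ici
  refine not_summable_gaussianReal_Ici_threshold (hsum.congr fun n => ?_)
  exact (hB.hasLaw_sub_div_sqrt (sampleTime_pos _).le (sampleTime_succ_lt n)).measureReal_eq
    (p := (threshold n ≤ ·)) measurableSet_Ici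

lemma ae_eventually_neg_two_threshold_lt (hB : IsBrownianMotion P B) :
    ∀ᵐ ω ∂P, ∀ᶠ n in atTop,
      -(2 * threshold n) < B (sampleTime (n + 1)) ω / √(sampleTime (n + 1)) := by
  have := hB.isProb
  have htail (n : ℕ) : P.real {ω | B (sampleTime (n + 1)) ω / √(sampleTime (n + 1)) ≤
      -(2 * threshold n)} ≤ (((n : ℝ) + 1) ^ 2)⁻¹ := by
    refine ((hB.hasLaw_div_sqrt (sampleTime_pos _)).measureReal_le_neg_le_of_gaussianReal
      (by positivity [threshold_nonneg n])).trans_eq ?_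
    rw [NNReal.coe_one, mul_one,
      show -(2 * threshold n) ^ 2 / 2 = -threshold n ^ 2 + -threshold n ^ 2 by ring, exp_add,
      exp_neg_threshold_sq, ← mul_inv, ← sq]
  have hsum : Summable fun n : ℕ => (((n : ℝ) + 1) ^ 2)⁻¹ := by
    exact_mod_cast (summable_nat_add_iff 1).2 (Real.summable_nat_pow_inv.2 one_lt_two)
  filter_upwards [ae_eventually_notMem_of_summable_measureReal
    (hsum.of_nonneg_of_le (fun n => measureReal_nonneg) htail)] with ω hω
  exact hω.mono fun n hn => not_le.1 hn

lemma ae_frequently_threshold_div_four_le (hB : IsBrownianMotion P B) :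
    ∀ᵐ ω ∂P, ∃ᶠ n in atTop, threshold n / 4 ≤ B (sampleTime n) ω / √(sampleTime n) := by
  filter_upwards [hB.ae_frequently_threshold_le_increment, hB.ae_eventually_neg_two_threshold_lt]
    with ω hinc hend
  exact (hinc.and_eventually hend).mono fun n hn =>
    div_four_le_div_sqrt (sampleTime_pos _) (sixteen_mul_sampleTime_succ n)
      (threshold_nonneg n) hn.1 hn.2

end IsBrownianMotion

/-- Almost surely, limsup_{t→0⁺} B_t/√t = ∞ for a standard
Brownian motion started at 0. -/
theorem limsup_brownian_div_sqrt_eq_top {Ω : Type*} [MeasurableSpace Ω]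
    (P : Measure Ω) (B : ℝ → Ω → ℝ) (hB : IsBrownianMotion P B) :
    ∀ᵐ ω ∂P, Filter.limsup (fun t => ((B t ω / Real.sqrt t : ℝ) : EReal))
      (nhdsWithin 0 (Set.Ioi 0)) = ⊤ := by
  filter_upwards [hB.ae_frequently_threshold_div_four_le] with ω hω
  exact EReal.limsup_coe_eq_top_of_frequently BrownianLimsup.tendsto_sampleTime
    (BrownianLimsup.tendsto_threshold.atTop_div_const (by norm_num)) hω
end

section
/- Let X : [0,∞) → ℝ be locally Hölder continuous with exponent γ ∈ [1/2, 1], and for r < X_0 let τ_r = inf{t ≥ 0 : B_t ≥ X_t} be the first hitting time of the curve X by a Brownian motion started at r. Then for every s > 0, P_r(τ_r > s) → 0 as r → X_0⁻. -/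
open MeasureTheory ProbabilityTheory

/-!
Hölder continuity with exponent `γ ≥ 1/2` gives `X u - X 0 ≤ C √u` for small `u`, while Brownian
motion exceeds `C √u` along a sequence of times `t k ↓ 0` almost surely. Along times with
`t k / t (k + 1) = (k + 2) ^ 2`, the independent increments `B (t k) - B (t (k + 1))` exceed
`3 C √(t k - t (k + 1))` infinitely often by the second Borel–Cantelli lemma, while
`|B (t (k + 1))| < C √(t k)` eventually by Chebyshev's inequality and the first one. So almost
surely `X 0 + B` crosses `X` at some `t k ≤ s`, and the events `∀ k, r + B (t k) < X (t k)`,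
which contain `{τ_r > s}`, decrease to a null set as `r ↑ X 0`.
-/

open Set Filter Topology
open scoped NNReal ENNReal Nat

lemma gaussianReal_Ici_mul_sqrt {v : ℝ≥0} (hv : v ≠ 0) (a : ℝ) :
    gaussianReal 0 v (Ici (a * √v)) = gaussianReal 0 1 (Ici a) := by
  have hsqrt : 0 < √(v : ℝ) := Real.sqrt_pos.2 (NNReal.coe_pos.2 (pos_iff_ne_zero.2 hv))
  have hmap : (gaussianReal 0 v).map (· / √v) = gaussianReal 0 1 := by
    rw [gaussianReal_map_div_const, zero_div]
    congr 1
    ext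
    simp [hv]
  rw [← hmap, Measure.map_apply (measurable_div_const _) measurableSet_Ici]
  congr 1
  ext x
  simp [le_div_iff₀ hsqrt]

lemma gaussianReal_Ici_pos (μ : ℝ) {v : ℝ≥0} (hv : v ≠ 0) (a : ℝ) :
    0 < gaussianReal μ v (Ici a) :=
  pos_iff_ne_zero.2 fun h ↦ by simpa using gaussianReal_absolutelyContinuous' μ hv h

lemma gaussianReal_setOf_le_abs_le (v : ℝ≥0) {a : ℝ} (ha : 0 < a) :
    gaussianReal 0 v {x | a ≤ |x|} ≤ ENNReal.ofReal (v / a ^ 2) := by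
  simpa [integral_id_gaussianReal, variance_id_gaussianReal] using
    meas_ge_le_variance_div_sq (memLp_id_gaussianReal (μ := 0) (v := v) 2) ha

lemma le_abs_mul_sqrt_of_le_mul_rpow {a m d γ : ℝ} (hγ : 1 / 2 ≤ γ) (hd₀ : 0 ≤ d) (hd₁ : d ≤ 1)
    (h : a ≤ m * d ^ γ) : a ≤ |m| * √d := by
  calc a ≤ |m| * d ^ γ := h.trans (by gcongr; exact le_abs_self m)
    _ ≤ |m| * d ^ (1 / 2 : ℝ) :=
      mul_le_mul_of_nonneg_left (Real.rpow_le_rpow_of_exponent_ge' hd₀ hd₁ (by norm_num) hγ)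
        (abs_nonneg m)
    _ = |m| * √d := by rw [Real.sqrt_eq_rpow]

lemma tendsto_measure_setOf_forall_lt_nhdsLT {Ω ι : Type*} [MeasurableSpace Ω] [Countable ι]
    {μ : Measure Ω} [IsFiniteMeasure μ] {f : ι → Ω → ℝ} (hf : ∀ i, Measurable (f i)) {a : ℝ}
    (h : ∀ᵐ ω ∂μ, ∃ i, f i ω < a) :
    Tendsto (fun r ↦ μ {ω | ∀ i, r < f i ω}) (𝓝[<] a) (𝓝 0) := by
  -- in `ℝᵒᵈ` the limit `r ↑ a` becomes `r ↓ a`, the setting of `tendsto_measure_biInter_gt`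
  let s : ℝᵒᵈ → Set Ω := fun r ↦ {ω | ∀ i, OrderDual.ofDual r < f i ω}
  have hlim := tendsto_measure_biInter_gt (μ := μ) (s := s) (a := OrderDual.toDual a)
    (fun r _ ↦ by
      simp only [s, ofPred_forall]
      exact (MeasurableSet.iInter fun i ↦
        measurableSet_lt measurable_const (hf i)).nullMeasurableSet)
    (fun r r' _ hr ω hω i ↦ lt_of_le_of_lt hr (hω i))
    ⟨OrderDual.toDual (a - 1), OrderDual.toDual_lt_toDual.2 (sub_one_lt a), measure_ne_top _ _⟩
  have hnull : μ (⋂ r > OrderDual.toDual a, s r) = 0 := by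
    refine measure_mono_null (fun ω hω ↦ ?_) (ae_iff.1 h)
    simp only [mem_iInter, s] at hω
    simp only [mem_ofPred_eq, not_exists, not_lt]
    exact fun i ↦ le_of_forall_lt fun r hr ↦ hω (OrderDual.toDual r) hr i
  rwa [hnull] at hlim

noncomputable def fastTimes (t₀ : ℝ) (k : ℕ) : ℝ := t₀ / ((k + 1)! : ℝ) ^ 2

section fastTimes

variable {t₀ : ℝ}

lemma fastTimes_pos (ht₀ : 0 < t₀) (k : ℕ) : 0 < fastTimes t₀ k := by
  unfold fastTimes; positivity

lemma fastTimes_nonneg (ht₀ : 0 ≤ t₀) (k : ℕ) : 0 ≤ fastTimes t₀ k := by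
  unfold fastTimes; positivity

lemma fastTimes_le (ht₀ : 0 ≤ t₀) (k : ℕ) : fastTimes t₀ k ≤ t₀ :=
  div_le_self ht₀ (one_le_pow₀ (by exact_mod_cast (k + 1).factorial_pos))

lemma fastTimes_eq_mul_succ (t₀ : ℝ) (k : ℕ) :
    fastTimes t₀ k = ((k : ℝ) + 2) ^ 2 * fastTimes t₀ (k + 1) := by
  have := Nat.factorial_ne_zero (k + 1)
  simp only [fastTimes, Nat.factorial_succ (k + 1)]
  push_cast
  field_simp
  ring

lemma fastTimes_strictAnti (ht₀ : 0 < t₀) : StrictAnti (fastTimes t₀) :=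
  strictAnti_nat_of_succ_lt fun k ↦ by
    rw [fastTimes_eq_mul_succ t₀ k]
    exact lt_mul_left (fastTimes_pos ht₀ _) (by nlinarith [(k.cast_nonneg : (0 : ℝ) ≤ k)])

lemma summable_fastTimes_succ_div (ht₀ : 0 < t₀) :
    Summable fun k ↦ fastTimes t₀ (k + 1) / fastTimes t₀ k := by
  have h (k : ℕ) : fastTimes t₀ (k + 1) / fastTimes t₀ k = 1 / ((k + 2 : ℕ) : ℝ) ^ 2 := by
    rw [fastTimes_eq_mul_succ t₀ k, div_mul_cancel_right₀ (fastTimes_pos ht₀ _).ne']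
    push_cast; ring
  simp only [h]
  exact (summable_nat_add_iff 2).2 (Real.summable_one_div_nat_pow.2 one_lt_two)

lemma two_mul_sqrt_fastTimes_le (ht₀ : 0 ≤ t₀) (k : ℕ) :
    2 * √(fastTimes t₀ k) ≤ 3 * √(fastTimes t₀ k - fastTimes t₀ (k + 1)) := by
  have hk := fastTimes_nonneg ht₀ k
  have h : 4 * fastTimes t₀ k ≤ 9 * (fastTimes t₀ k - fastTimes t₀ (k + 1)) := by
    have h4 : 4 ≤ ((k : ℝ) + 2) ^ 2 := by nlinarith [(k.cast_nonneg : (0 : ℝ) ≤ k)]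
    rw [fastTimes_eq_mul_succ t₀ k]
    have hk' := fastTimes_nonneg ht₀ (k + 1)
    nlinarith [mul_le_mul_of_nonneg_right h4 hk']
  refine (pow_le_pow_iff_left₀ (by positivity) (by positivity) two_ne_zero).1 ?_
  rw [mul_pow, mul_pow, Real.sq_sqrt hk, Real.sq_sqrt (by linarith)]
  linarith

end fastTimes

namespace IsBrownianMotion

variable {Ω : Type*} [MeasurableSpace Ω] {P : Measure Ω} {B : ℝ → Ω → ℝ}

lemma map_eval (hB : IsBrownianMotion P B) {t : ℝ} (ht : 0 ≤ t) :
    P.map (B t) = gaussianReal 0 t.toNNReal := by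
  have h := hB.incr 0 t le_rfl ht
  rw [sub_zero] at h
  rw [← h]
  exact Measure.map_congr (by filter_upwards [hB.start] with ω hω; simp [hω])

lemma iIndepFun_sub_succ (hB : IsBrownianMotion P B) {t : ℕ → ℝ} (ht : Antitone t)
    (ht₀ : ∀ k, 0 ≤ t k) : iIndepFun (fun k ω ↦ B (t k) ω - B (t (k + 1)) ω) P := by
  have := hB.isProb
  refine iIndepFun_iff_finset.2 fun S ↦ ?_
  obtain rfl | hS := S.eq_empty_or_nonempty
  · exact iIndepFun.of_subsingleton
  set N := S.max' hS
  have hle (k : S) : (k : ℕ) ≤ N := S.le_max' _ k.2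
  -- reversing time turns the antitone sequence into a monotone one
  let g (k : S) : Fin (N + 1) := ⟨N - k, by omega⟩
  have hg : Function.Injective g := fun k l hkl ↦ by
    have := hle k; have := hle l
    simp only [g, Fin.mk.injEq] at hkl
    exact Subtype.ext (by omega)
  convert (hB.indep (N + 1) (fun i ↦ t (N + 1 - i)) (fun i j hij ↦ ht (by omega))
    fun _ ↦ ht₀ _).precomp hg using 3 with k ω
  have := hle k
  simp only [Finset.restrict, g, Fin.val_succ, Fin.val_castSucc]
  congr 3 <;> omega

lemma ae_frequently_mul_sqrt_le_sub_succ (hB : IsBrownianMotion P B) {t : ℕ → ℝ}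
    (ht : StrictAnti t) (ht₀ : ∀ k, 0 ≤ t k) (a : ℝ) :
    ∀ᵐ ω ∂P, ∃ᶠ k in atTop, a * √(t k - t (k + 1)) ≤ B (t k) ω - B (t (k + 1)) ω := by
  have := hB.isProb
  have hmeas (k : ℕ) : Measurable fun ω ↦ B (t k) ω - B (t (k + 1)) ω :=
    (hB.meas _).sub (hB.meas _)
  set D : ℕ → Set Ω :=
    fun k ↦ (fun ω ↦ B (t k) ω - B (t (k + 1)) ω) ⁻¹' Ici (a * √(t k - t (k + 1)))
  have hDmeas (k : ℕ) : MeasurableSet (D k) := hmeas k measurableSet_Ici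
  -- by scaling, every `D k` has the same positive probability
  have hD (k : ℕ) : P (D k) = gaussianReal 0 1 (Ici a) := by
    have hpos : 0 < t k - t (k + 1) := sub_pos.2 (ht (lt_add_one k))
    rw [← gaussianReal_Ici_mul_sqrt (Real.toNNReal_pos.2 hpos).ne', Real.coe_toNNReal _ hpos.le,
      ← hB.incr _ _ (ht₀ _) (ht.antitone k.le_succ), Measure.map_apply (hmeas k) measurableSet_Ici]
  have hindep : iIndepSet D P := (iIndepSet_iff_meas_biInter hDmeas).2 fun S ↦
    (hB.iIndepFun_sub_succ ht.antitone ht₀).measure_inter_preimage_eq_mul S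
      fun _ _ ↦ measurableSet_Ici
  have hlimsup : P (limsup D atTop) = 1 := measure_limsup_eq_one hDmeas hindep <| by
    simp only [hD, ENNReal.tsum_const_eq_top_of_ne_zero (gaussianReal_Ici_pos 0 one_ne_zero a).ne']
  have hae : ∀ᵐ ω ∂P, ω ∈ limsup D atTop := by
    rw [ae_mem_iff_measure_eq (MeasurableSet.measurableSet_limsup hDmeas).nullMeasurableSet,
      hlimsup, measure_univ]
  filter_upwards [hae] with ω hω
  exact mem_limsup_iff_frequently_mem.1 hω

lemma ae_eventually_abs_lt_mul_sqrt (hB : IsBrownianMotion P B) {t : ℕ → ℝ}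
    (ht : ∀ k, 0 < t k) (hsum : Summable fun k ↦ t (k + 1) / t k) {c : ℝ} (hc : 0 < c) :
    ∀ᵐ ω ∂P, ∀ᶠ k in atTop, |B (t (k + 1)) ω| < c * √(t k) := by
  have hF (k : ℕ) : P (B (t (k + 1)) ⁻¹' {x | c * √(t k) ≤ |x|})
      ≤ ENNReal.ofReal (t (k + 1) / t k / c ^ 2) := by
    have hc' : 0 < c * √(t k) := mul_pos hc (Real.sqrt_pos.2 (ht k))
    rw [← Measure.map_apply (hB.meas _) (measurableSet_le measurable_const measurable_abs),
      hB.map_eval (ht _).le]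
    refine (gaussianReal_setOf_le_abs_le _ hc').trans_eq ?_
    rw [Real.coe_toNNReal _ (ht _).le, mul_pow, Real.sq_sqrt (ht k).le]
    ring_nf
  have hfin : ∑' k, P (B (t (k + 1)) ⁻¹' {x | c * √(t k) ≤ |x|}) ≠ ∞ :=
    ne_top_of_le_ne_top (hsum.div_const _).tsum_ofReal_ne_top (ENNReal.tsum_le_tsum hF)
  filter_upwards [ae_eventually_notMem hfin] with ω hω
  filter_upwards [hω] with k hk
  simpa using hk

lemma ae_frequently_mul_sqrt_fastTimes_lt (hB : IsBrownianMotion P B) {c t₀ : ℝ} (hc : 0 < c)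
    (ht₀ : 0 < t₀) :
    ∀ᵐ ω ∂P, ∃ᶠ k in atTop, c * √(fastTimes t₀ k) < B (fastTimes t₀ k) ω := by
  filter_upwards [hB.ae_frequently_mul_sqrt_le_sub_succ (fastTimes_strictAnti ht₀)
      (fastTimes_nonneg ht₀.le) (3 * c),
    hB.ae_eventually_abs_lt_mul_sqrt (fastTimes_pos ht₀) (summable_fastTimes_succ_div ht₀) hc]
    with ω hlarge hsmall
  refine (hlarge.and_eventually hsmall).mono fun k ⟨hk, hk'⟩ ↦ ?_
  nlinarith [two_mul_sqrt_fastTimes_le ht₀.le k, neg_abs_le (B (fastTimes t₀ (k + 1)) ω)]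

end IsBrownianMotion

-- `{τ_r > s}` is the event that `r + B` stays strictly below `X` on `[0, s]`.
theorem hitting_time_tendsto_zero_near_boundary_general {Ω : Type*} [MeasurableSpace Ω]
    (P : Measure Ω) (B : ℝ → Ω → ℝ) (hB : IsBrownianMotion P B)
    (X : ℝ → ℝ) (γ : ℝ) (hγ : 1 / 2 ≤ γ ∧ γ ≤ 1)
    (hHolder : ∀ T > (0:ℝ), ∃ m : ℝ, ∀ s ∈ Set.Icc (0:ℝ) T, ∀ u ∈ Set.Icc (0:ℝ) T,
      |X u - X s| ≤ m * |u - s| ^ γ)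
    (s : ℝ) (hs : 0 < s) :
    Filter.Tendsto (fun r => P {ω | ∀ u ∈ Set.Icc 0 s, r + B u ω < X u})
      (nhdsWithin (X 0) (Set.Iio (X 0))) (nhds 0) := by
  have := hB.isProb
  obtain ⟨m, hm⟩ := hHolder s hs
  have ht₀ : 0 < min s 1 := lt_min hs one_pos
  set t := fastTimes (min s 1)
  have ht (k : ℕ) : t k ∈ Icc 0 s :=
    ⟨fastTimes_nonneg ht₀.le k, (fastTimes_le ht₀.le k).trans (min_le_left _ _)⟩
  have hX (k : ℕ) : X (t k) - X 0 ≤ |m| * √(t k) := by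
    refine le_abs_mul_sqrt_of_le_mul_rpow hγ.1 (ht k).1
      ((fastTimes_le ht₀.le k).trans (min_le_right _ _)) ?_
    simpa [abs_of_nonneg (ht k).1] using (le_abs_self _).trans (hm 0 ⟨le_rfl, hs.le⟩ _ (ht k))
  have hcross : ∀ᵐ ω ∂P, ∃ k, X (t k) - B (t k) ω < X 0 := by
    filter_upwards [hB.ae_frequently_mul_sqrt_fastTimes_lt (c := |m| + 1) (by positivity) ht₀]
      with ω hω
    obtain ⟨k, hk⟩ := hω.exists
    exact ⟨k, by nlinarith [hX k, Real.sqrt_nonneg (t k)]⟩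
  refine tendsto_of_tendsto_of_tendsto_of_le_of_le tendsto_const_nhds
    (tendsto_measure_setOf_forall_lt_nhdsLT (fun k ↦ (hB.meas (t k)).const_sub (X (t k))) hcross)
    (fun _ ↦ zero_le) fun r ↦ measure_mono fun ω hω k ↦ ?_
  linarith [hω (t k) (ht k)]

/-- If X is continuous on [0,∞) and locally Hölder continuous with
exponent γ ∈ [1/2,1], and τ_r is the first hitting time of the curve X by a
Brownian motion started at r < X 0 (realized here as r + B with B started at 0),
then for every s > 0, P_r(τ_r > s) → 0 as r → X 0 from the left.  The event
{τ_r > s} is the event that r + B stays strictly below X on [0,s]. -/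
theorem hitting_time_tendsto_zero_near_boundary {Ω : Type*} [MeasurableSpace Ω]
    (P : Measure Ω) (B : ℝ → Ω → ℝ) (hB : IsBrownianMotion P B)
    (X : ℝ → ℝ) (γ : ℝ) (hγ : 1 / 2 ≤ γ ∧ γ ≤ 1)
    (hXcont : ContinuousOn X (Set.Ici 0))
    (hHolder : ∀ T > (0:ℝ), ∃ m : ℝ, ∀ s ∈ Set.Icc (0:ℝ) T, ∀ u ∈ Set.Icc (0:ℝ) T,
      |X u - X s| ≤ m * |u - s| ^ γ)
    (s : ℝ) (hs : 0 < s) :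
    Filter.Tendsto (fun r => P {ω | ∀ u ∈ Set.Icc 0 s, r + B u ω < X u})
      (nhdsWithin (X 0) (Set.Iio (X 0))) (nhds 0) :=
  hitting_time_tendsto_zero_near_boundary_general P B hB X γ hγ hHolder s hs
end

section
/- Let X : [0,∞) → ℝ be locally Hölder continuous with exponent γ ∈ (1/2,1], X_0 = 0, and fix r₀ < 0. Then there exists a unique continuous function p : [0,∞) → ℝ with p(0) = 0 satisfying the Volterra integral equation p(t) = −∂_x G(X_t,t;r₀,0) + ∫₀ᵗ ∂_x G(X_t,t;X_τ,τ) p(τ) dτ for all t > 0. -/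
/-!
By the Hölder bound, `|∂ₓG(X_t,t;X_τ,τ)| ≤ m (t-τ)^(γ-3/2)`, an integrable singularity since
`γ > 1/2`. Conjugating the equation by `exp (c t)` multiplies this bound by `exp (-c (t-τ))`, and
`m ∫₀^∞ s^(α-1) exp (-c s) ds = m Γ(α) c^(-α)` (with `α = γ - 1/2`) is `< 1` for large `c`: this is
Bielecki's weighted norm, in which the Volterra operator is a contraction on `C([0,T])`. Banach's
fixed point theorem gives a unique solution on every `[0,T]`; by uniqueness these agree and glue
to one on `[0,∞)`. The forcing term is continuous at `t = 0` because `X_t → 0` keeps `X_t` away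
from `r₀ < 0`, so that the Gaussian factor `exp (-r₀² / (8t))` beats the blow-up `t^(-3/2)`.
-/

open MeasureTheory Filter Set

/-- The heat kernel G(x,t;ξ,s) = (2π(t−s))^{−1/2} exp(−(x−ξ)²/(2(t−s))) for
the equation v_t = ½ v_{xx}. -/
noncomputable def heatG (x t ξ s : ℝ) : ℝ :=
  (Real.sqrt (2 * Real.pi * (t - s)))⁻¹ * Real.exp (-(x - ξ) ^ 2 / (2 * (t - s)))

/-- The spatial derivative ∂_x G(x,t;ξ,s) = −(x−ξ)/(t−s) · G(x,t;ξ,s). -/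
noncomputable def heatGx (x t ξ s : ℝ) : ℝ :=
  -((x - ξ) / (t - s)) * heatG x t ξ s

open Topology Real

noncomputable def volterra (k : ℝ → ℝ → ℝ) (u : ℝ → ℝ) (t : ℝ) : ℝ :=
  ∫ τ in Ioo 0 t, k t τ * u τ

def IsVolterraSolution (k : ℝ → ℝ → ℝ) (g : ℝ → ℝ) (S : Set ℝ) (u : ℝ → ℝ) : Prop :=
  ContinuousOn u S ∧ ∀ t ∈ S, u t = g t + volterra k u t

def HasUniqueVolterraSolution (k : ℝ → ℝ → ℝ) (g : ℝ → ℝ) (S : Set ℝ) : Prop :=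
  ∃ u, IsVolterraSolution k g S u ∧ ∀ v, IsVolterraSolution k g S v → EqOn v u S

section Volterra

variable {k : ℝ → ℝ → ℝ} {g u v : ℝ → ℝ} {t : ℝ}

theorem volterra_congr (h : EqOn u v (Ioo 0 t)) : volterra k u t = volterra k v t :=
  setIntegral_congr_fun measurableSet_Ioo fun τ hτ => by rw [h hτ]

theorem volterra_apply_zero : volterra k u 0 = 0 := by
  simp [volterra]

theorem volterra_eq_integral_sub (ht : 0 ≤ t) :
    volterra k u t = ∫ s in Ioo 0 t, k t (t - s) * u (t - s) := by
  rw [volterra, ← integral_Ioc_eq_integral_Ioo, ← integral_Ioc_eq_integral_Ioo,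
    ← intervalIntegral.integral_of_le ht, ← intervalIntegral.integral_of_le ht,
    intervalIntegral.integral_comp_sub_left (fun τ => k t τ * u τ) t, sub_self, sub_zero]

theorem volterra_exp_mul (c : ℝ) :
    volterra (fun t τ => exp (-(c * (t - τ))) * k t τ) (fun τ => exp (-(c * τ)) * u τ) t =
      exp (-(c * t)) * volterra k u t := by
  rw [volterra, volterra, ← integral_const_mul]
  refine setIntegral_congr_fun measurableSet_Ioo fun τ _ => ?_
  have : exp (-(c * (t - τ))) * exp (-(c * τ)) = exp (-(c * t)) := by
    rw [← exp_add]; ring_nf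
  linear_combination k t τ * u τ * this

theorem IsVolterraSolution.mono {S S' : Set ℝ} (h : IsVolterraSolution k g S u) (hS : S' ⊆ S) :
    IsVolterraSolution k g S' u :=
  ⟨h.1.mono hS, fun t ht => h.2 t (hS ht)⟩

theorem isVolterraSolution_Ici_iff (hg : g 0 = 0) :
    IsVolterraSolution k g (Ici 0) u ↔
      ContinuousOn u (Ici 0) ∧ u 0 = 0 ∧ ∀ t > 0, u t = g t + volterra k u t := by
  refine and_congr_right fun _ => ⟨fun h => ⟨?_, fun t ht => h t ht.le⟩, fun h t ht => ?_⟩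
  · simpa [hg, volterra_apply_zero] using h 0 self_mem_Ici
  · rcases (mem_Ici.1 ht).eq_or_lt with rfl | ht
    · simp [h.1, hg, volterra_apply_zero]
    · exact h.2 t ht

theorem isVolterraSolution_exp_mul_iff (c : ℝ) {S : Set ℝ} :
    IsVolterraSolution (fun t τ => exp (-(c * (t - τ))) * k t τ) (fun t => exp (-(c * t)) * g t) S
      (fun t => exp (-(c * t)) * u t) ↔ IsVolterraSolution k g S u := by
  refine and_congr ⟨fun h => ?_, fun h => (Continuous.continuousOn (by fun_prop)).mul h⟩ ?_
  · refine ((Continuous.continuousOn (f := fun t => exp (c * t)) (by fun_prop)).mul h).congr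
      fun t _ => ?_
    simp [← mul_assoc, ← exp_add]
  · refine forall₂_congr fun t _ => ?_
    rw [volterra_exp_mul, ← mul_add]
    exact mul_right_inj' (exp_ne_zero _)

theorem hasUniqueVolterraSolution_Ici (h : ∀ T > 0, HasUniqueVolterraSolution k g (Icc 0 T)) :
    HasUniqueVolterraSolution k g (Ici 0) := by
  choose! P hP hP_unique using h
  have hagree {T T' : ℝ} (hT : 0 < T) (hTT' : T ≤ T') : EqOn (P T') (P T) (Icc 0 T) :=
    hP_unique T hT _ ((hP T' (hT.trans_le hTT')).mono (Icc_subset_Icc_right hTT'))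
  set u := fun t => P (t + 1) t
  have hu {T t : ℝ} (hT : 0 < T) (ht : t ∈ Icc 0 T) : u t = P T t := by
    rcases le_total T (t + 1) with h | h
    · exact hagree hT h ht
    · exact (hagree (by linarith [ht.1]) h ⟨ht.1, by linarith⟩).symm
  refine ⟨u, ⟨fun t ht => ?_, fun t ht => ?_⟩, fun v hv t ht => ?_⟩
  · have hT : 0 < t + 1 := by linarith [mem_Ici.1 ht]
    have hnhds : Icc 0 (t + 1) ∈ 𝓝[Ici 0] t :=
      Ici_inter_Iic (a := (0 : ℝ)) ▸ inter_mem_nhdsWithin _ (Iic_mem_nhds (lt_add_one t))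
    exact (((hP _ hT).1.congr fun x hx => hu hT hx) t ⟨ht, by linarith⟩).mono_of_mem_nhdsWithin
      hnhds
  · have hT : 0 < t + 1 := by linarith [mem_Ici.1 ht]
    rw [hu hT ⟨ht, by linarith⟩, (hP _ hT).2 t ⟨ht, by linarith⟩,
      volterra_congr fun τ hτ => (hu hT ⟨hτ.1.le, by linarith [hτ.2]⟩).symm]
  · have hT : 0 < t + 1 := by linarith [mem_Ici.1 ht]
    exact hP_unique _ hT v (hv.mono Icc_subset_Ici_self) ⟨ht, by linarith⟩

end Volterra

structure IsDominatedKernel (k : ℝ → ℝ → ℝ) (ρ : ℝ → ℝ) (T : ℝ) : Prop where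
  continuousOn : ContinuousOn (Function.uncurry k) {p : ℝ × ℝ | 0 < p.2 ∧ p.2 < p.1}
  integrableOn : IntegrableOn ρ (Ioo 0 T)
  abs_le : ∀ t ≤ T, ∀ τ ∈ Ioo 0 t, |k t τ| ≤ ρ (t - τ)

namespace IsDominatedKernel

variable {k : ℝ → ℝ → ℝ} {ρ g u w : ℝ → ℝ} {T B : ℝ}

theorem nonneg (hk : IsDominatedKernel k ρ T) {s : ℝ} (hs : s ∈ Ioo 0 T) : 0 ≤ ρ s := by
  have := hk.abs_le T le_rfl (T - s) ⟨by linarith [hs.2], by linarith [hs.1]⟩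
  rw [sub_sub_cancel] at this
  exact (abs_nonneg _).trans this

theorem continuousAt_sub (hk : IsDominatedKernel k ρ T) {t s : ℝ} (hs : 0 < s) (hst : s < t) :
    ContinuousAt (fun t => k t (t - s)) t := by
  have hopen : IsOpen {p : ℝ × ℝ | 0 < p.2 ∧ p.2 < p.1} :=
    (isOpen_lt continuous_const continuous_snd).inter (isOpen_lt continuous_snd continuous_fst)
  have hmem : (t, t - s) ∈ {p : ℝ × ℝ | 0 < p.2 ∧ p.2 < p.1} := ⟨sub_pos.2 hst, sub_lt_self t hs⟩
  exact (hk.continuousOn.continuousAt (hopen.mem_nhds hmem)).comp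
    (f := fun t => (t, t - s)) (by fun_prop)

theorem continuousOn_integrand (hk : IsDominatedKernel k ρ T) (hu : Continuous u) (t : ℝ) :
    ContinuousOn (fun s => k t (t - s) * u (t - s)) (Ioo 0 t) := by
  refine ContinuousOn.mul ?_ (hu.comp (continuous_sub_left t)).continuousOn
  exact hk.continuousOn.comp (f := fun s => (t, t - s)) (by fun_prop)
    fun s hs => ⟨sub_pos.2 hs.2, sub_lt_self t hs.1⟩

theorem abs_integrand_le (hk : IsDominatedKernel k ρ T) (hB : ∀ x, |u x| ≤ B) {t s : ℝ}
    (ht : t ≤ T) (hs : s ∈ Ioo 0 t) : |k t (t - s) * u (t - s)| ≤ ρ s * B := by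
  have := hk.abs_le t ht (t - s) ⟨sub_pos.2 hs.2, sub_lt_self t hs.1⟩
  rw [sub_sub_cancel] at this
  rw [abs_mul]
  exact mul_le_mul this (hB _) (abs_nonneg _) ((abs_nonneg _).trans this)

theorem integrableOn_integrand (hk : IsDominatedKernel k ρ T) (hu : Continuous u)
    (hB : ∀ x, |u x| ≤ B) {t : ℝ} (ht : t ≤ T) :
    IntegrableOn (fun s => k t (t - s) * u (t - s)) (Ioo 0 t) := by
  refine Integrable.mono' ((hk.integrableOn.mono_set (Ioo_subset_Ioo_right ht)).mul_const B)
    ((hk.continuousOn_integrand hu t).aestronglyMeasurable measurableSet_Ioo) ?_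
  filter_upwards [self_mem_ae_restrict measurableSet_Ioo] with s hs
  exact hk.abs_integrand_le hB ht hs

theorem abs_volterra_sub_le (hk : IsDominatedKernel k ρ T) (hu : Continuous u)
    (hw : Continuous w) (hBu : ∀ x, |u x| ≤ B) {B' : ℝ} (hBw : ∀ x, |w x| ≤ B') {D : ℝ}
    (hD : ∀ x, |u x - w x| ≤ D) {t : ℝ} (ht : t ∈ Icc 0 T) :
    |volterra k u t - volterra k w t| ≤ (∫ s in Ioo 0 T, ρ s) * D := by
  have hD0 : 0 ≤ D := (abs_nonneg _).trans (hD 0)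
  rw [volterra_eq_integral_sub ht.1, volterra_eq_integral_sub ht.1,
    ← integral_sub (hk.integrableOn_integrand hu hBu ht.2) (hk.integrableOn_integrand hw hBw ht.2),
    ← Real.norm_eq_abs]
  calc ‖∫ s in Ioo 0 t, (k t (t - s) * u (t - s) - k t (t - s) * w (t - s))‖
      ≤ ∫ s in Ioo 0 t, ρ s * D := by
        refine norm_integral_le_of_norm_le ((hk.integrableOn.mono_set
          (Ioo_subset_Ioo_right ht.2)).mul_const D) ?_
        filter_upwards [self_mem_ae_restrict measurableSet_Ioo] with s hs
        rw [Real.norm_eq_abs, ← mul_sub]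
        exact hk.abs_integrand_le (u := fun x => u x - w x) hD ht.2 hs
    _ ≤ (∫ s in Ioo 0 T, ρ s) * D := by
        rw [integral_mul_const]
        refine mul_le_mul_of_nonneg_right (setIntegral_mono_set hk.integrableOn ?_
          (Ioo_subset_Ioo_right ht.2).eventuallyLE) hD0
        filter_upwards [self_mem_ae_restrict measurableSet_Ioo] with s hs using hk.nonneg hs


theorem continuousAt_indicator_integrand (hk : IsDominatedKernel k ρ T) (hu : Continuous u)
    {s t₀ : ℝ} (hs : 0 < s) (hst : s ≠ t₀) :
    ContinuousAt (fun t => (Ioo 0 t).indicator (fun s => k t (t - s) * u (t - s)) s) t₀ := by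
  rcases hst.lt_or_gt with hlt | hgt
  · refine ((hk.continuousAt_sub hs hlt).mul
      (hu.comp (continuous_sub_right s)).continuousAt).congr ?_
    filter_upwards [lt_mem_nhds hlt] with t ht
    rw [indicator_of_mem (show s ∈ Ioo 0 t from ⟨hs, ht⟩)]
    rfl
  · refine (continuousAt_const (y := (0 : ℝ))).congr ?_
    filter_upwards [gt_mem_nhds hgt] with t ht
    rw [indicator_of_notMem fun h => h.2.not_gt ht]

/-- After the substitution `τ = t - s` the singularity sits at `s = 0` for every `t`, so `ρ`
dominates the integrands uniformly in `t`. -/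
theorem continuousOn_volterra (hk : IsDominatedKernel k ρ T) (hu : Continuous u)
    (hB : ∀ x, |u x| ≤ B) : ContinuousOn (volterra k u) (Icc 0 T) := by
  set F : ℝ → ℝ → ℝ := fun t => (Ioo 0 t).indicator fun s => k t (t - s) * u (t - s)
  have hF : EqOn (fun t => ∫ s in Ioo 0 T, F t s) (volterra k u) (Icc 0 T) := fun t ht => by
    dsimp only [F]
    rw [volterra_eq_integral_sub ht.1, setIntegral_indicator measurableSet_Ioo, Ioo_inter_Ioo,
      max_self, min_eq_right ht.2]
  refine fun t₀ ht₀ => (continuousWithinAt_of_dominated (bound := fun s => ρ s * B) ?_ ?_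
    (hk.integrableOn.mul_const B) ?_).congr_of_mem (fun t ht => (hF ht).symm) ht₀
  · filter_upwards [self_mem_nhdsWithin] with t ht
    rw [aestronglyMeasurable_indicator_iff measurableSet_Ioo,
      Measure.restrict_restrict measurableSet_Ioo]
    exact ((hk.continuousOn_integrand hu t).mono inter_subset_left).aestronglyMeasurable
      (measurableSet_Ioo.inter measurableSet_Ioo)
  · filter_upwards [self_mem_nhdsWithin] with t ht
    filter_upwards [self_mem_ae_restrict measurableSet_Ioo] with s hs
    dsimp only [F]
    by_cases hst : s ∈ Ioo 0 t
    · rw [indicator_of_mem hst]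
      exact hk.abs_integrand_le hB ht.2 hst
    · rw [indicator_of_notMem hst, norm_zero]
      exact mul_nonneg (hk.nonneg hs) ((abs_nonneg _).trans (hB 0))
  · filter_upwards [self_mem_ae_restrict measurableSet_Ioo,
      ae_restrict_of_ae (volume.ae_ne t₀)] with s hs hst
    exact (hk.continuousAt_indicator_integrand hu hs.1 hst).continuousWithinAt

theorem hasUniqueVolterraSolution (hk : IsDominatedKernel k ρ T) (hT : 0 < T)
    (hρ : ∫ s in Ioo 0 T, ρ s < 1) (hg : ContinuousOn g (Icc 0 T)) :
    HasUniqueVolterraSolution k g (Icc 0 T) := by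
  set q := ∫ s in Ioo 0 T, ρ s
  have hq : 0 ≤ q := setIntegral_nonneg_ae measurableSet_Ioo
    (Eventually.of_forall fun s hs => hk.nonneg hs)
  let ext : C(Icc 0 T, ℝ) → ℝ → ℝ := fun v => IccExtend hT.le v
  have ext_of_mem (v : C(Icc 0 T, ℝ)) {t : ℝ} (ht : t ∈ Icc 0 T) : ext v t = v ⟨t, ht⟩ :=
    IccExtend_of_mem _ _ ht
  have ext_cont (v : C(Icc 0 T, ℝ)) : Continuous (ext v) := v.continuous.Icc_extend'
  have ext_le (v : C(Icc 0 T, ℝ)) (x : ℝ) : |ext v x| ≤ ‖v‖ := v.norm_coe_le_norm _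
  have ext_sub_le (v w : C(Icc 0 T, ℝ)) (x : ℝ) : |ext v x - ext w x| ≤ dist v w :=
    (Real.dist_eq _ _).symm.trans_le (ContinuousMap.dist_apply_le_dist _)
  let Φ : C(Icc 0 T, ℝ) → C(Icc 0 T, ℝ) := fun v =>
    ⟨(Icc 0 T).domRestrict (g + volterra k (ext v)),
      (hg.add (hk.continuousOn_volterra (ext_cont v) (ext_le v))).domRestrict⟩
  have Φ_apply (v : C(Icc 0 T, ℝ)) (x : Icc 0 T) : Φ v x = g x + volterra k (ext v) x := rfl
  have hΦ : ContractingWith q.toNNReal Φ := by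
    refine ⟨toNNReal_lt_one.2 hρ, LipschitzWith.of_dist_le_mul fun v w => ?_⟩
    rw [coe_toNNReal q hq, ContinuousMap.dist_le (by positivity)]
    intro x
    rw [Real.dist_eq, Φ_apply, Φ_apply, add_sub_add_left_eq_sub]
    exact hk.abs_volterra_sub_le (ext_cont v) (ext_cont w) (ext_le v) (ext_le w)
      (ext_sub_le v w) x.2
  refine ⟨ext hΦ.fixedPoint, ⟨(ext_cont _).continuousOn, fun t ht => ?_⟩, fun v hv t ht => ?_⟩
  · rw [ext_of_mem _ ht, ← Φ_apply _ ⟨t, ht⟩, hΦ.fixedPoint_isFixedPt]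
  · let w : C(Icc 0 T, ℝ) := ⟨(Icc 0 T).domRestrict v, hv.1.domRestrict⟩
    have hw : EqOn (ext w) v (Icc 0 T) := fun t ht => ext_of_mem w ht
    have hfix : Φ w = w := by
      ext ⟨t, ht⟩
      have hIoo : Ioo 0 t ⊆ Icc 0 T := Ioo_subset_Icc_self.trans (Icc_subset_Icc_right ht.2)
      rw [Φ_apply, volterra_congr (hw.mono hIoo), ← hv.2 t ht]
      rfl
    rw [← hw ht, hΦ.fixedPoint_unique hfix]

end IsDominatedKernel

section WeaklySingular

variable {k : ℝ → ℝ → ℝ} {g : ℝ → ℝ} {T C α c : ℝ}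

theorem integrableOn_rpow_mul_exp_neg_mul (hα : 0 < α) (hc : 0 < c) :
    IntegrableOn (fun s => s ^ (α - 1) * exp (-(c * s))) (Ioi 0) := by
  simpa [neg_mul] using integrableOn_rpow_mul_exp_neg_mul_rpow (s := α - 1) (p := 1)
    (by linarith) one_pos hc

theorem integral_Ioo_rpow_mul_exp_neg_mul_le (hα : 0 < α) (hc : 0 < c) :
    ∫ s in Ioo 0 T, s ^ (α - 1) * exp (-(c * s)) ≤ c ^ (-α) * Gamma α := by
  rw [rpow_neg hc.le, ← inv_rpow hc.le, ← one_div, ← integral_rpow_mul_exp_neg_mul_Ioi hα hc]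
  refine setIntegral_mono_set (integrableOn_rpow_mul_exp_neg_mul hα hc) ?_
    Ioo_subset_Ioi_self.eventuallyLE
  filter_upwards [self_mem_ae_restrict measurableSet_Ioi] with s (hs : 0 < s)
  positivity

theorem isDominatedKernel_exp_mul (hα : 0 < α) (hc : 0 < c)
    (hk : ContinuousOn (Function.uncurry k) {p : ℝ × ℝ | 0 < p.2 ∧ p.2 < p.1})
    (hC : ∀ t ≤ T, ∀ τ ∈ Ioo 0 t, |k t τ| ≤ C * (t - τ) ^ (α - 1)) :
    IsDominatedKernel (fun t τ => exp (-(c * (t - τ))) * k t τ)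
      (fun s => C * (s ^ (α - 1) * exp (-(c * s)))) T where
  continuousOn := (Continuous.continuousOn (by fun_prop)).mul hk
  integrableOn :=
    ((integrableOn_rpow_mul_exp_neg_mul hα hc).mono_set Ioo_subset_Ioi_self).const_mul C
  abs_le t ht τ hτ := by
    rw [abs_mul, abs_of_pos (exp_pos _)]
    calc exp (-(c * (t - τ))) * |k t τ| ≤ exp (-(c * (t - τ))) * (C * (t - τ) ^ (α - 1)) :=
          mul_le_mul_of_nonneg_left (hC t ht τ hτ) (exp_pos _).le
      _ = C * ((t - τ) ^ (α - 1) * exp (-(c * (t - τ)))) := by ring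

theorem hasUniqueVolterraSolution_Icc_of_abs_le_rpow (hα : 0 < α) (hT : 0 < T)
    (hk : ContinuousOn (Function.uncurry k) {p : ℝ × ℝ | 0 < p.2 ∧ p.2 < p.1})
    (hC : ∀ t ≤ T, ∀ τ ∈ Ioo 0 t, |k t τ| ≤ C * (t - τ) ^ (α - 1))
    (hg : ContinuousOn g (Icc 0 T)) : HasUniqueVolterraSolution k g (Icc 0 T) := by
  wlog hC₀ : 0 ≤ C generalizing C
  · refine this (C := max C 0) (fun t ht τ hτ => (hC t ht τ hτ).trans ?_) (le_max_right C 0)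
    exact mul_le_mul_of_nonneg_right (le_max_left C 0) (rpow_nonneg (sub_pos.2 hτ.2).le _)
  have hsmall : Tendsto (fun c => C * (c ^ (-α) * Gamma α)) atTop (𝓝 0) := by
    simpa using ((tendsto_rpow_neg_atTop hα).mul_const (Gamma α)).const_mul C
  obtain ⟨c, hc1, hc⟩ := ((hsmall.eventually (gt_mem_nhds one_pos)).and
    (eventually_gt_atTop 0)).exists
  have hρ : ∫ s in Ioo 0 T, C * (s ^ (α - 1) * exp (-(c * s))) < 1 := by
    rw [integral_const_mul]
    exact (mul_le_mul_of_nonneg_left (integral_Ioo_rpow_mul_exp_neg_mul_le hα hc) hC₀).trans_lt hc1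
  obtain ⟨v, hv, hv_unique⟩ := (isDominatedKernel_exp_mul hα hc hk hC).hasUniqueVolterraSolution
    (g := fun t => exp (-(c * t)) * g t) hT hρ ((Continuous.continuousOn (by fun_prop)).mul hg)
  have hexp (u : ℝ → ℝ) (t : ℝ) : exp (c * t) * (exp (-(c * t)) * u t) = u t := by
    rw [← mul_assoc, ← exp_add, add_neg_cancel, exp_zero, one_mul]
  refine ⟨fun t => exp (c * t) * v t, ?_, fun w hw t ht => ?_⟩
  · refine (isVolterraSolution_exp_mul_iff c).1 ?_
    convert hv using 1
    funext t
    rw [← mul_assoc, ← exp_add, neg_add_cancel, exp_zero, one_mul]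
  · rw [← hexp w t]
    exact congrArg (exp (c * t) * ·) (hv_unique _ ((isVolterraSolution_exp_mul_iff c).2 hw) ht)

end WeaklySingular

section HeatKernel

variable {x t ξ s r : ℝ}

theorem ContinuousAt.heatGx {β : Type*} [TopologicalSpace β] {x t ξ s : β → ℝ} {b : β}
    (hx : ContinuousAt x b) (ht : ContinuousAt t b) (hξ : ContinuousAt ξ b)
    (hs : ContinuousAt s b) (hst : s b < t b) :
    ContinuousAt (fun b => _root_.heatGx (x b) (t b) (ξ b) (s b)) b := by
  have hd : t b - s b ≠ 0 := (sub_pos.2 hst).ne'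
  unfold _root_.heatGx heatG
  refine (((hx.sub hξ).div (ht.sub hs) hd).neg).mul ((ContinuousAt.inv₀ ?_ ?_).mul ?_)
  · exact continuous_sqrt.continuousAt.comp (continuousAt_const.mul (ht.sub hs))
  · exact (sqrt_pos.2 (by positivity)).ne'
  · exact continuous_exp.continuousAt.comp
      (((hx.sub hξ).pow 2).neg.div (continuousAt_const.mul (ht.sub hs)) (by positivity))

theorem abs_heatGx_le (h : s < t) :
    |heatGx x t ξ s| ≤ |x - ξ| * (t - s) ^ (-(3 / 2 : ℝ)) * exp (-(x - ξ) ^ 2 / (2 * (t - s))) := by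
  have hd : 0 < t - s := sub_pos.2 h
  have hsqrt : (√(2 * π * (t - s)))⁻¹ ≤ (√(t - s))⁻¹ :=
    inv_anti₀ (sqrt_pos.2 hd) (sqrt_le_sqrt (by nlinarith [pi_gt_three]))
  have hpow : (t - s) ^ (-(3 / 2 : ℝ)) = (t - s)⁻¹ * (√(t - s))⁻¹ := by
    rw [rpow_neg hd.le, sqrt_eq_rpow, ← mul_inv, ← rpow_one_add' hd.le (by norm_num)]
    norm_num
  calc |heatGx x t ξ s|
      = |x - ξ| * (t - s)⁻¹ * ((√(2 * π * (t - s)))⁻¹ * exp (-(x - ξ) ^ 2 / (2 * (t - s)))) := by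
        rw [heatGx, heatG, abs_mul, abs_neg, abs_div, abs_of_pos hd, abs_mul,
          abs_of_nonneg (inv_nonneg.2 (sqrt_nonneg _)), abs_of_pos (exp_pos _), div_eq_mul_inv]
    _ ≤ |x - ξ| * (t - s)⁻¹ * ((√(t - s))⁻¹ * exp (-(x - ξ) ^ 2 / (2 * (t - s)))) := by gcongr
    _ = |x - ξ| * (t - s) ^ (-(3 / 2 : ℝ)) * exp (-(x - ξ) ^ 2 / (2 * (t - s))) := by
        rw [hpow]; ring

theorem abs_heatGx_le_of_abs_sub_le {M γ : ℝ} (h : s < t) (hM : |x - ξ| ≤ M * (t - s) ^ γ) :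
    |heatGx x t ξ s| ≤ M * (t - s) ^ (γ - 3 / 2) := by
  have hd : 0 < t - s := sub_pos.2 h
  have hexp : exp (-(x - ξ) ^ 2 / (2 * (t - s))) ≤ 1 :=
    exp_le_one_iff.2 (div_nonpos_of_nonpos_of_nonneg (neg_nonpos.2 (sq_nonneg _)) (by positivity))
  calc |heatGx x t ξ s|
      ≤ |x - ξ| * (t - s) ^ (-(3 / 2 : ℝ)) * 1 :=
        (abs_heatGx_le h).trans (mul_le_mul_of_nonneg_left hexp (by positivity))
    _ ≤ M * (t - s) ^ γ * (t - s) ^ (-(3 / 2 : ℝ)) := by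
        rw [mul_one]; exact mul_le_mul_of_nonneg_right hM (by positivity)
    _ = M * (t - s) ^ (γ - 3 / 2) := by rw [mul_assoc, ← rpow_add hd, ← sub_eq_add_neg]

theorem abs_heatGx_zero_le (ht : 0 < t) (hx : |x| ≤ |r| / 2) :
    |heatGx x t r 0| ≤ 3 * |r| / 2 * (t⁻¹ ^ (3 / 2 : ℝ) * exp (-(r ^ 2 / 8) * t⁻¹)) := by
  have hupper : |x - r| ≤ 3 * |r| / 2 := (abs_sub _ _).trans (by linarith)
  have hlower : r ^ 2 / 4 ≤ (x - r) ^ 2 := by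
    have : |r| / 2 ≤ |x - r| := by linarith [abs_sub_abs_le_abs_sub r x, abs_sub_comm x r]
    nlinarith [sq_abs r, sq_abs (x - r), abs_nonneg r]
  have hexp : exp (-(x - r) ^ 2 / (2 * t)) ≤ exp (-(r ^ 2 / 8) * t⁻¹) := by
    rw [exp_le_exp, show -(x - r) ^ 2 / (2 * t) = -((x - r) ^ 2 / 2) * t⁻¹ by
      rw [div_eq_mul_inv, mul_inv]; ring]
    exact mul_le_mul_of_nonneg_right (by linarith) (inv_nonneg.2 ht.le)
  have := abs_heatGx_le (x := x) (ξ := r) ht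
  rw [sub_zero, rpow_neg ht.le, ← inv_rpow ht.le] at this
  refine this.trans ?_
  rw [mul_assoc]
  gcongr

theorem tendsto_heatGx_zero {X : ℝ → ℝ} (hX : Tendsto X (𝓝[>] 0) (𝓝 0)) (hr : r ≠ 0) :
    Tendsto (fun t => heatGx (X t) t r 0) (𝓝[>] 0) (𝓝 0) := by
  have hlim : Tendsto (fun t : ℝ => 3 * |r| / 2 * (t⁻¹ ^ (3 / 2 : ℝ) * exp (-(r ^ 2 / 8) * t⁻¹)))
      (𝓝[>] 0) (𝓝 0) := by
    simpa using ((tendsto_rpow_mul_exp_neg_mul_atTop_nhds_zero _ _ (by positivity)).comp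
      tendsto_inv_nhdsGT_zero).const_mul (3 * |r| / 2)
  refine squeeze_zero_norm' ?_ hlim
  have hsmall : ∀ᶠ t in 𝓝[>] 0, |X t| ≤ |r| / 2 :=
    hX.abs.eventually (ge_mem_nhds (by rw [abs_zero]; exact half_pos (abs_pos.2 hr)))
  filter_upwards [hsmall, self_mem_nhdsWithin] with t hxt (ht : 0 < t)
  exact abs_heatGx_zero_le ht hxt

end HeatKernel

section Path

variable {X : ℝ → ℝ}

theorem continuousOn_Ici_of_holder {γ : ℝ} (hγ : 0 < γ)
    (hHolder : ∀ T > (0 : ℝ), ∃ m : ℝ, ∀ s ∈ Icc (0 : ℝ) T, ∀ u ∈ Icc (0 : ℝ) T,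
      |X u - X s| ≤ m * |u - s| ^ γ) :
    ContinuousOn X (Ici 0) := by
  intro t₀ ht₀
  obtain ⟨m, hm⟩ := hHolder (t₀ + 1) (by linarith [mem_Ici.1 ht₀])
  have hlim : Tendsto (fun u => m * |u - t₀| ^ γ) (𝓝[Ici 0] t₀) (𝓝 0) := by
    have hcont : Continuous fun u => m * |u - t₀| ^ γ :=
      continuous_const.mul ((continuous_abs.comp (continuous_sub_right t₀)).rpow_const
        fun _ => Or.inr hγ.le)
    simpa [zero_rpow hγ.ne'] using (hcont.tendsto t₀).mono_left nhdsWithin_le_nhds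
  rw [ContinuousWithinAt, tendsto_iff_norm_sub_tendsto_zero]
  refine squeeze_zero' (Eventually.of_forall fun _ => norm_nonneg _) ?_ hlim
  filter_upwards [self_mem_nhdsWithin, nhdsWithin_le_nhds (Iic_mem_nhds (lt_add_one t₀))]
    with u hu₀ hu₁ using hm t₀ ⟨ht₀, by linarith⟩ u ⟨hu₀, hu₁⟩

theorem continuousOn_heatGx_kernel (hX : ContinuousOn X (Ioi 0)) :
    ContinuousOn (Function.uncurry fun t τ => heatGx (X t) t (X τ) τ)
      {p : ℝ × ℝ | 0 < p.2 ∧ p.2 < p.1} := fun _ hp =>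
  (ContinuousAt.heatGx ((hX.continuousAt (Ioi_mem_nhds (hp.1.trans hp.2))).comp continuousAt_fst)
    continuousAt_fst ((hX.continuousAt (Ioi_mem_nhds hp.1)).comp continuousAt_snd)
    continuousAt_snd hp.2).continuousWithinAt

theorem continuousOn_heatGx_source (hX : ContinuousOn X (Ici 0)) (hX0 : X 0 = 0) {r : ℝ}
    (hr : r ≠ 0) : ContinuousOn (fun t => -heatGx (X t) t r 0) (Ici 0) := by
  intro t ht
  rcases (mem_Ici.1 ht).eq_or_lt with rfl | ht
  · have hX' : Tendsto X (𝓝[>] 0) (𝓝 (X 0)) :=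
      (hX 0 self_mem_Ici).tendsto.mono_left (nhdsWithin_mono 0 Ioi_subset_Ici_self)
    rw [hX0] at hX'
    rw [← Ioi_insert, continuousWithinAt_insert_self, ContinuousWithinAt]
    simpa [heatGx] using (tendsto_heatGx_zero hX' hr).neg
  · exact (ContinuousAt.heatGx (hX.continuousAt (Ici_mem_nhds ht)) continuousAt_id
      continuousAt_const continuousAt_const ht).neg.continuousWithinAt

end Path

theorem volterra_existence_uniqueness_general (X : ℝ → ℝ) (γ : ℝ)
    (hγ : 1 / 2 < γ ∧ γ ≤ 1) (hX0 : X 0 = 0)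
    (hHolder : ∀ T > (0:ℝ), ∃ m : ℝ, ∀ s ∈ Set.Icc (0:ℝ) T, ∀ u ∈ Set.Icc (0:ℝ) T,
      |X u - X s| ≤ m * |u - s| ^ γ)
    (r₀ : ℝ) (hr₀ : r₀ < 0) :
    ∃ p : ℝ → ℝ,
      (ContinuousOn p (Set.Ici 0) ∧ p 0 = 0 ∧ ∀ t > (0:ℝ),
        p t = -heatGx (X t) t r₀ 0 +
          ∫ τ in Set.Ioo 0 t, heatGx (X t) t (X τ) τ * p τ) ∧
      ∀ q : ℝ → ℝ,
        (ContinuousOn q (Set.Ici 0) ∧ q 0 = 0 ∧ ∀ t > (0:ℝ),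
          q t = -heatGx (X t) t r₀ 0 +
            ∫ τ in Set.Ioo 0 t, heatGx (X t) t (X τ) τ * q τ) →
        ∀ t ≥ (0:ℝ), q t = p t := by
  have hα : 0 < γ - 1 / 2 := by linarith [hγ.1]
  have hX := continuousOn_Ici_of_holder (by linarith) hHolder
  have hkernel (T : ℝ) (hT : 0 < T) : ∃ C, ∀ t ≤ T, ∀ τ ∈ Ioo 0 t,
      |heatGx (X t) t (X τ) τ| ≤ C * (t - τ) ^ (γ - 1 / 2 - 1) := by
    obtain ⟨m, hm⟩ := hHolder T hT
    refine ⟨m, fun t ht τ hτ => ?_⟩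
    have hXτ := hm τ ⟨hτ.1.le, hτ.2.le.trans ht⟩ t ⟨(hτ.1.trans hτ.2).le, ht⟩
    rw [abs_of_pos (sub_pos.2 hτ.2)] at hXτ
    rw [show γ - 1 / 2 - 1 = γ - 3 / 2 by ring]
    exact abs_heatGx_le_of_abs_sub_le hτ.2 hXτ
  obtain ⟨p, hp, hp_unique⟩ := hasUniqueVolterraSolution_Ici fun T hT =>
    (hkernel T hT).elim fun _ hC => hasUniqueVolterraSolution_Icc_of_abs_le_rpow hα hT
      (continuousOn_heatGx_kernel (hX.mono Ioi_subset_Ici_self)) hC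
      ((continuousOn_heatGx_source hX hX0 hr₀.ne).mono Icc_subset_Ici_self)
  have hg0 : -heatGx (X 0) 0 r₀ 0 = 0 := by simp [heatGx]
  exact ⟨p, (isVolterraSolution_Ici_iff hg0).1 hp,
    fun q hq t ht => hp_unique q ((isVolterraSolution_Ici_iff hg0).2 hq) ht⟩

/-- For X locally Hölder with exponent γ ∈ (1/2,1], X 0 = 0 and
r₀ < 0, there is a unique continuous p : [0,∞) → ℝ with p 0 = 0 satisfying
p(t) = −∂_x G(X_t,t;r₀,0) + ∫₀ᵗ ∂_x G(X_t,t;X_τ,τ) p(τ) dτ for all t > 0. -/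
theorem volterra_existence_uniqueness (X : ℝ → ℝ) (γ : ℝ)
    (hγ : 1 / 2 < γ ∧ γ ≤ 1) (hX0 : X 0 = 0)
    (hXcont : ContinuousOn X (Set.Ici 0))
    (hHolder : ∀ T > (0:ℝ), ∃ m : ℝ, ∀ s ∈ Set.Icc (0:ℝ) T, ∀ u ∈ Set.Icc (0:ℝ) T,
      |X u - X s| ≤ m * |u - s| ^ γ)
    (r₀ : ℝ) (hr₀ : r₀ < 0) :
    ∃ p : ℝ → ℝ,
      (ContinuousOn p (Set.Ici 0) ∧ p 0 = 0 ∧ ∀ t > (0:ℝ),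
        p t = -heatGx (X t) t r₀ 0 +
          ∫ τ in Set.Ioo 0 t, heatGx (X t) t (X τ) τ * p τ) ∧
      ∀ q : ℝ → ℝ,
        (ContinuousOn q (Set.Ici 0) ∧ q 0 = 0 ∧ ∀ t > (0:ℝ),
          q t = -heatGx (X t) t r₀ 0 +
            ∫ τ in Set.Ioo 0 t, heatGx (X t) t (X τ) τ * q τ) →
        ∀ t ≥ (0:ℝ), q t = p t :=
  volterra_existence_uniqueness_general X γ hγ hX0 hHolder r₀ hr₀
end

section
/- Let X be locally Hölder with exponent γ ∈ (1/2,1], X_0 = 0, r₀ < 0, and let h_n ∈ C_c^∞(ℝ;ℝ₊) with supp h_n ⊂ [r₀−1/n, r₀+1/n] and ∫h_n = 1. Let p_n solve p_n(t) = −∫ h_n(ξ)∂_x G(X_t,t;ξ,0)dξ + ∫₀ᵗ ∂_x G(X_t,t;X_τ,τ)p_n(τ)dτ, and let p solve the same equation with the first term replaced by −∂_x G(X_t,t;r₀,0). Then for every η ∈ (0,1/2) and T > 0, sup_{0<t≤T} t^{1−η}|p_n(t) − p(t)| → 0 as n → ∞. -/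
open MeasureTheory Filter Set

lemma aux_intOn_rpow_Ioc {b c : ℝ} (hb : 0 < b) (hc : 0 ≤ c) :
    IntegrableOn (fun τ : ℝ => τ ^ (b - 1)) (Ioc 0 c) := by
  have h := intervalIntegral.intervalIntegrable_rpow' (a := 0) (b := c) (r := b - 1)
    (by linarith)
  exact (intervalIntegrable_iff_integrableOn_Ioc_of_le hc).1 h

lemma aux_int_rpow_Ioc {b c : ℝ} (hb : 0 < b) (hc : 0 ≤ c) :
    ∫ τ in Ioc (0:ℝ) c, τ ^ (b - 1) = c ^ b / b := by
  rw [← intervalIntegral.integral_of_le hc, integral_rpow (Or.inl (by linarith))]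
  rw [show b - 1 + 1 = b by ring, Real.zero_rpow (by linarith : b ≠ 0)]
  ring

lemma aux_intOn_refl_rpow {a t α : ℝ} (hα : 0 < α) (hat : a ≤ t) :
    IntegrableOn (fun τ : ℝ => (t - τ) ^ (α - 1)) (Ioc a t) := by
  have h1 : IntervalIntegrable (fun x : ℝ => x ^ (α - 1)) volume 0 (t - a) :=
    intervalIntegral.intervalIntegrable_rpow' (by linarith)
  have h2 := h1.comp_sub_left t
  simp only [sub_zero, sub_sub_cancel] at h2
  exact (intervalIntegrable_iff_integrableOn_Ioc_of_le hat).1 h2.symm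

lemma aux_int_refl_rpow {a t α : ℝ} (hα : 0 < α) (hat : a ≤ t) :
    ∫ τ in Ioc a t, (t - τ) ^ (α - 1) = (t - a) ^ α / α := by
  rw [← intervalIntegral.integral_of_le hat,
    intervalIntegral.integral_comp_sub_left (fun x : ℝ => x ^ (α - 1)) t]
  simp only [sub_self, sub_sub_cancel]
  rw [integral_rpow (Or.inl (by linarith))]
  rw [show α - 1 + 1 = α by ring, Real.zero_rpow (by linarith : α ≠ 0)]
  ring

lemma aux_contOn_F {t α η l : ℝ} {s : Set ℝ} (hs : ∀ τ ∈ s, 0 < τ ∧ τ < t) :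
    ContinuousOn (fun τ : ℝ => (t - τ) ^ (α - 1) * τ ^ (η - 1) * Real.exp (-(l * (t - τ)))) s := by
  have h1 : ContinuousOn (fun τ : ℝ => (t - τ) ^ (α - 1)) s :=
    ((continuous_const.sub continuous_id).continuousOn).rpow_const
      (fun τ hτ => Or.inl (by have := (hs τ hτ).2; simp only [Pi.sub_apply, id]; intro h; nlinarith [sub_eq_zero.mp h]))
  have h2 : ContinuousOn (fun τ : ℝ => τ ^ (η - 1)) s :=
    continuousOn_id.rpow_const (fun τ hτ => Or.inl (ne_of_gt (hs τ hτ).1))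
  have h3 : ContinuousOn (fun τ : ℝ => Real.exp (-(l * (t - τ)))) s :=
    (Real.continuous_exp.comp ((continuous_const.mul (continuous_const.sub continuous_id)).neg)).continuousOn
  exact (h1.mul h2).mul h3

lemma aux_contOn_G {t α l : ℝ} {s : Set ℝ} (hs : ∀ τ ∈ s, τ < t) :
    ContinuousOn (fun τ : ℝ => (t - τ) ^ (α - 1) * Real.exp (-(l * (t - τ)))) s := by
  have h1 : ContinuousOn (fun τ : ℝ => (t - τ) ^ (α - 1)) s :=
    ((continuous_const.sub continuous_id).continuousOn).rpow_const
      (fun τ hτ => Or.inl (by have := hs τ hτ; simp only [Pi.sub_apply, id]; intro h; nlinarith [sub_eq_zero.mp h]))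
  have h3 : ContinuousOn (fun τ : ℝ => Real.exp (-(l * (t - τ)))) s :=
    (Real.continuous_exp.comp ((continuous_const.mul (continuous_const.sub continuous_id)).neg)).continuousOn
  exact h1.mul h3

lemma aux_intOn_F {t α η l : ℝ} (hα : 0 < α) (hα1 : α ≤ 1) (hη : 0 < η) (hη1 : η ≤ 1)
    (ht : 0 < t) (hl : 0 ≤ l) :
    IntegrableOn (fun τ : ℝ => (t - τ) ^ (α - 1) * τ ^ (η - 1) * Real.exp (-(l * (t - τ))))
      (Ioo 0 t) := by
  have hsplit : Ioc (0:ℝ) (t/2) ∪ Ioo (t/2) t = Ioo 0 t :=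
    Ioc_union_Ioo_eq_Ioo (by linarith) (by linarith)
  rw [← hsplit]
  apply IntegrableOn.union
  · apply Integrable.mono' ((aux_intOn_rpow_Ioc hη (by linarith)).const_mul ((t/2) ^ (α - 1)))
    · exact (aux_contOn_F (fun τ hτ => ⟨hτ.1, by have := hτ.2; linarith⟩)).aestronglyMeasurable
        measurableSet_Ioc
    · filter_upwards [ae_restrict_mem measurableSet_Ioc] with τ hτ
      have h0τ : 0 < τ := hτ.1
      have hτt : τ ≤ t/2 := hτ.2
      have h1 : (0:ℝ) < t - τ := by linarith
      have h2 : (t - τ) ^ (α - 1) ≤ (t/2) ^ (α - 1) :=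
        Real.rpow_le_rpow_of_nonpos (by linarith) (by linarith) (by linarith)
      have h3 : Real.exp (-(l * (t - τ))) ≤ 1 := by
        rw [Real.exp_le_one_iff]; nlinarith
      rw [Real.norm_eq_abs, abs_of_nonneg (by positivity)]
      calc (t - τ) ^ (α - 1) * τ ^ (η - 1) * Real.exp (-(l * (t - τ)))
          ≤ (t - τ) ^ (α - 1) * τ ^ (η - 1) * 1 :=
            mul_le_mul_of_nonneg_left h3 (by positivity)
        _ ≤ (t/2) ^ (α - 1) * τ ^ (η - 1) := by
            rw [mul_one]; exact mul_le_mul_of_nonneg_right h2 (by positivity)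
  · apply Integrable.mono'
      (((aux_intOn_refl_rpow hα (by linarith : t/2 ≤ t)).mono_set Ioo_subset_Ioc_self).mul_const
        ((t/2) ^ (η - 1)))
    · exact (aux_contOn_F (fun τ hτ => ⟨by have := hτ.1; linarith, hτ.2⟩)).aestronglyMeasurable
        measurableSet_Ioo
    · filter_upwards [ae_restrict_mem measurableSet_Ioo] with τ hτ
      have h0τ : t/2 < τ := hτ.1
      have hτt : τ < t := hτ.2
      have h1 : (0:ℝ) < t - τ := by linarith
      have h0τ' : (0:ℝ) < τ := by linarith
      have h2 : τ ^ (η - 1) ≤ (t/2) ^ (η - 1) :=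
        Real.rpow_le_rpow_of_nonpos (by linarith) (by linarith) (by linarith)
      have h3 : Real.exp (-(l * (t - τ))) ≤ 1 := by
        rw [Real.exp_le_one_iff]; nlinarith
      rw [Real.norm_eq_abs, abs_of_nonneg (by positivity)]
      calc (t - τ) ^ (α - 1) * τ ^ (η - 1) * Real.exp (-(l * (t - τ)))
          ≤ (t - τ) ^ (α - 1) * τ ^ (η - 1) * 1 :=
            mul_le_mul_of_nonneg_left h3 (by positivity)
        _ ≤ (t - τ) ^ (α - 1) * (t/2) ^ (η - 1) := by
            rw [mul_one]; exact mul_le_mul_of_nonneg_left h2 (by positivity)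

set_option maxHeartbeats 1000000 in
lemma aux_kal {T α η : ℝ} (hT : 0 < T) (hα : 0 < α) (hα1 : α ≤ 1) (hη : 0 < η) (hη1 : η ≤ 1)
    {ε : ℝ} (hε : 0 < ε) :
    ∃ l : ℝ, 0 ≤ l ∧ ∀ t ∈ Ioc (0:ℝ) T,
      t ^ (1 - η) * ∫ τ in Ioo (0:ℝ) t,
        (t - τ) ^ (α - 1) * τ ^ (η - 1) * Real.exp (-(l * (t - τ))) ≤ ε := by
  classical
  set A : ℝ := 2/η + 2/α with hA
  have hApos : 0 < A := by positivity
  set δ : ℝ := min 1 ((ε/(2*A)) ^ α⁻¹) with hδdef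
  have hδpos : 0 < δ := lt_min one_pos (Real.rpow_pos_of_pos (by positivity) _)
  have hδα : A * δ ^ α ≤ ε / 2 := by
    have h1 : δ ^ α ≤ ((ε/(2*A)) ^ α⁻¹) ^ α :=
      Real.rpow_le_rpow hδpos.le (min_le_right _ _) hα.le
    rw [Real.rpow_inv_rpow (by positivity) (ne_of_gt hα)] at h1
    calc A * δ ^ α ≤ A * (ε/(2*A)) := mul_le_mul_of_nonneg_left h1 hApos.le
      _ = ε / 2 := by field_simp
  set B : ℝ := 2 * T ^ α / η + 2 * T * δ ^ (α - 1) with hB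
  have hBpos : 0 < B := by
    have h1 := Real.rpow_pos_of_pos hT α
    have h2 := Real.rpow_pos_of_pos hδpos (α - 1)
    positivity
  set l : ℝ := max 0 (-Real.log (ε/(2*B)) / δ) with hl
  have hl0 : 0 ≤ l := le_max_left _ _
  have hexp : Real.exp (-(l * δ)) ≤ ε / (2*B) := by
    have h1 : -Real.log (ε/(2*B)) / δ ≤ l := le_max_right _ _
    have h2 : -Real.log (ε/(2*B)) ≤ l * δ := by
      rw [div_le_iff₀ hδpos] at h1; linarith
    calc Real.exp (-(l * δ)) ≤ Real.exp (Real.log (ε/(2*B))) := by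
          rw [Real.exp_le_exp]; linarith
      _ = ε / (2*B) := Real.exp_log (by positivity)
  refine ⟨l, hl0, fun t ht => ?_⟩
  obtain ⟨ht0, htT⟩ := ht
  set E : ℝ := Real.exp (-(l * δ)) with hE
  have hEnn : 0 ≤ E := Real.exp_nonneg _
  have hδ1' : 0 < δ ^ (α - 1) := Real.rpow_pos_of_pos hδpos _
  have hδα' : 0 < δ ^ α := Real.rpow_pos_of_pos hδpos _
  have hTα' : 0 < T ^ α := Real.rpow_pos_of_pos hT _
  have hElog : ∀ x, δ ≤ x → Real.exp (-(l * x)) ≤ E := by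
    intro x hx
    rw [hE, Real.exp_le_exp]
    nlinarith
  clear_value A δ B l E
  clear hδdef hl hE
  set F : ℝ → ℝ := fun τ => (t - τ) ^ (α - 1) * τ ^ (η - 1) * Real.exp (-(l * (t - τ)))
    with hFdef
  have hsplit : Ioc (0:ℝ) (t/2) ∪ Ioo (t/2) t = Ioo 0 t :=
    Ioc_union_Ioo_eq_Ioo (by linarith) (by linarith)
  have hIF := aux_intOn_F (l := l) hα hα1 hη hη1 ht0 hl0
  have hI1 : IntegrableOn F (Ioc 0 (t/2)) := by
    apply hIF.mono_set; rw [← hsplit]; exact subset_union_left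
  have hI2 : IntegrableOn F (Ioo (t/2) t) := by
    apply hIF.mono_set; rw [← hsplit]; exact subset_union_right
  have hdisj : Disjoint (Ioc (0:ℝ) (t/2)) (Ioo (t/2) t) := by
    rw [Set.disjoint_left]; rintro x ⟨_, h2⟩ ⟨h3, _⟩; linarith
  have hsum : ∫ τ in Ioo (0:ℝ) t, F τ =
      (∫ τ in Ioc (0:ℝ) (t/2), F τ) + ∫ τ in Ioo (t/2) t, F τ := by
    rw [← hsplit, setIntegral_union hdisj measurableSet_Ioo hI1 hI2]
  -- J1 bound
  have hJ1 : ∫ τ in Ioc (0:ℝ) (t/2), F τ ≤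
      ((t/2) ^ (α - 1) * Real.exp (-(l * (t/2)))) * ((t/2) ^ η / η) := by
    rw [← aux_int_rpow_Ioc hη (by linarith : (0:ℝ) ≤ t/2)]
    rw [← MeasureTheory.integral_const_mul]
    apply setIntegral_mono_on hI1
      ((aux_intOn_rpow_Ioc hη (by linarith)).const_mul _) measurableSet_Ioc
    intro τ hτ
    have h0τ : 0 < τ := hτ.1
    have hτt : τ ≤ t/2 := hτ.2
    have h1 : (0:ℝ) < t - τ := by linarith
    have h2 : (t - τ) ^ (α - 1) ≤ (t/2) ^ (α - 1) :=
      Real.rpow_le_rpow_of_nonpos (by linarith) (by linarith) (by linarith)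
    have h3 : Real.exp (-(l * (t - τ))) ≤ Real.exp (-(l * (t/2))) := by
      rw [Real.exp_le_exp]; nlinarith
    calc (t - τ) ^ (α - 1) * τ ^ (η - 1) * Real.exp (-(l * (t - τ)))
        ≤ (t/2) ^ (α - 1) * τ ^ (η - 1) * Real.exp (-(l * (t/2))) := by
          apply mul_le_mul
          · exact mul_le_mul_of_nonneg_right h2 (by positivity)
          · exact h3
          · positivity
          · positivity
      _ = (t/2) ^ (α - 1) * Real.exp (-(l * (t/2))) * τ ^ (η - 1) := by ring
  -- J2 bound

  -- J2 pointwise bound: F ≤ (t/2)^(η-1) * G2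
  have hG2int : IntegrableOn (fun τ : ℝ => (t - τ) ^ (α - 1) * Real.exp (-(l * (t - τ))))
      (Ioo (t/2) t) := by
    apply Integrable.mono'
      ((aux_intOn_refl_rpow hα (by linarith : t/2 ≤ t)).mono_set Ioo_subset_Ioc_self)
    · exact (aux_contOn_G (fun τ hτ => hτ.2)).aestronglyMeasurable measurableSet_Ioo
    · filter_upwards [ae_restrict_mem measurableSet_Ioo] with τ hτ
      have h1 : (0:ℝ) < t - τ := by have := hτ.2; linarith
      have h3 : Real.exp (-(l * (t - τ))) ≤ 1 := by rw [Real.exp_le_one_iff]; nlinarith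
      rw [Real.norm_eq_abs, abs_of_nonneg (by positivity)]
      calc (t - τ) ^ (α - 1) * Real.exp (-(l * (t - τ))) ≤ (t - τ) ^ (α - 1) * 1 :=
            mul_le_mul_of_nonneg_left h3 (by positivity)
        _ = (t - τ) ^ (α - 1) := mul_one _
  have hJ2 : ∫ τ in Ioo (t/2) t, F τ ≤
      (t/2) ^ (η - 1) * ∫ τ in Ioo (t/2) t, ((t - τ) ^ (α - 1) * Real.exp (-(l * (t - τ)))) := by
    rw [← MeasureTheory.integral_const_mul]
    apply setIntegral_mono_on hI2 (hG2int.const_mul _) measurableSet_Ioo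
    intro τ hτ
    have h0τ : t/2 < τ := hτ.1
    have hτt : τ < t := hτ.2
    have h1 : (0:ℝ) < t - τ := by linarith
    have h0τ' : (0:ℝ) < τ := by linarith
    have h2 : τ ^ (η - 1) ≤ (t/2) ^ (η - 1) :=
      Real.rpow_le_rpow_of_nonpos (by linarith) (by linarith) (by linarith)
    calc (t - τ) ^ (α - 1) * τ ^ (η - 1) * Real.exp (-(l * (t - τ)))
        ≤ (t - τ) ^ (α - 1) * (t/2) ^ (η - 1) * Real.exp (-(l * (t - τ))) := by
          apply mul_le_mul_of_nonneg_right _ (Real.exp_nonneg _)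
          exact mul_le_mul_of_nonneg_left h2 (by positivity)
      _ = (t/2) ^ (η - 1) * ((t - τ) ^ (α - 1) * Real.exp (-(l * (t - τ)))) := by ring
  -- K2 bound
  have hK2nn : 0 ≤ ∫ τ in Ioo (t/2) t, ((t - τ) ^ (α - 1) * Real.exp (-(l * (t - τ)))) := by
    apply setIntegral_nonneg measurableSet_Ioo
    intro τ hτ
    have h1 : (0:ℝ) < t - τ := by have := hτ.2; linarith
    positivity
  have hK2 : ∫ τ in Ioo (t/2) t, ((t - τ) ^ (α - 1) * Real.exp (-(l * (t - τ)))) ≤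
      δ ^ α / α + T * δ ^ (α - 1) * E := by
    have hTd : 0 ≤ T * δ ^ (α - 1) * E := by
      have := Real.rpow_pos_of_pos hδpos (α - 1); positivity
    by_cases hcase : t ≤ 2*δ
    · have h1 : ∫ τ in Ioo (t/2) t, ((t - τ) ^ (α - 1) * Real.exp (-(l * (t - τ)))) ≤
          ∫ τ in Ioo (t/2) t, (t - τ) ^ (α - 1) := by
        apply setIntegral_mono_on hG2int
          ((aux_intOn_refl_rpow hα (by linarith : t/2 ≤ t)).mono_set Ioo_subset_Ioc_self)
          measurableSet_Ioo
        intro τ hτ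
        have hh : (0:ℝ) < t - τ := by have := hτ.2; linarith
        have h3 : Real.exp (-(l * (t - τ))) ≤ 1 := by rw [Real.exp_le_one_iff]; nlinarith
        calc (t - τ) ^ (α - 1) * Real.exp (-(l * (t - τ))) ≤ (t - τ) ^ (α - 1) * 1 :=
              mul_le_mul_of_nonneg_left h3 (by positivity)
          _ = (t - τ) ^ (α - 1) := mul_one _
      have h2 : ∫ τ in Ioo (t/2) t, (t - τ) ^ (α - 1) = (t/2) ^ α / α := by
        rw [← integral_Ioc_eq_integral_Ioo, aux_int_refl_rpow hα (by linarith : t/2 ≤ t),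
          show t - t/2 = t/2 by ring]
      have h3 : (t/2) ^ α ≤ δ ^ α := Real.rpow_le_rpow (by linarith) (by linarith) hα.le
      have h4 : (t/2) ^ α / α ≤ δ ^ α / α := by gcongr
      linarith
    · push_neg at hcase
      have hsplit2 : Ioc (t/2) (t - δ) ∪ Ioo (t - δ) t = Ioo (t/2) t :=
        Ioc_union_Ioo_eq_Ioo (by linarith) (by linarith)
      have hIa : IntegrableOn (fun τ : ℝ => (t - τ) ^ (α - 1) * Real.exp (-(l * (t - τ))))
          (Ioc (t/2) (t - δ)) := by
        apply hG2int.mono_set; rw [← hsplit2]; exact subset_union_left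
      have hIb : IntegrableOn (fun τ : ℝ => (t - τ) ^ (α - 1) * Real.exp (-(l * (t - τ))))
          (Ioo (t - δ) t) := by
        apply hG2int.mono_set; rw [← hsplit2]; exact subset_union_right
      have hdisj2 : Disjoint (Ioc (t/2) (t - δ)) (Ioo (t - δ) t) := by
        rw [Set.disjoint_left]; rintro x ⟨_, h2⟩ ⟨h3, _⟩; linarith
      rw [← hsplit2, setIntegral_union hdisj2 measurableSet_Ioo hIa hIb]
      have hb1 : ∫ τ in Ioc (t/2) (t - δ), ((t - τ) ^ (α - 1) * Real.exp (-(l * (t - τ)))) ≤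
          T * δ ^ (α - 1) * E := by
        have h1 : ∫ τ in Ioc (t/2) (t - δ), ((t - τ) ^ (α - 1) * Real.exp (-(l * (t - τ)))) ≤
            ∫ _ in Ioc (t/2) (t - δ), (δ ^ (α - 1) * E) := by
          apply setIntegral_mono_on hIa (integrableOn_const measure_Ioc_lt_top.ne)
            measurableSet_Ioc
          intro τ hτ
          have hd : δ ≤ t - τ := by have := hτ.2; linarith
          have hh1 : (t - τ) ^ (α - 1) ≤ δ ^ (α - 1) :=
            Real.rpow_le_rpow_of_nonpos hδpos hd (by linarith)
          have hh2 : Real.exp (-(l * (t - τ))) ≤ E := hElog _ hd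
          exact mul_le_mul hh1 hh2 (Real.exp_nonneg _) (by positivity)
        rw [setIntegral_const, measureReal_def, Real.volume_Ioc, smul_eq_mul] at h1
        have h2 : (ENNReal.ofReal (t - δ - t/2)).toReal ≤ T := by
          rw [ENNReal.toReal_ofReal (by linarith)]; linarith
        have h3 : (0:ℝ) ≤ δ ^ (α - 1) * E := by positivity
        calc ∫ τ in Ioc (t/2) (t - δ), ((t - τ) ^ (α - 1) * Real.exp (-(l * (t - τ))))
            ≤ (ENNReal.ofReal (t - δ - t/2)).toReal * (δ ^ (α - 1) * E) := h1
          _ ≤ T * (δ ^ (α - 1) * E) := mul_le_mul_of_nonneg_right h2 h3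
          _ = T * δ ^ (α - 1) * E := by ring
      have hb2 : ∫ τ in Ioo (t - δ) t, ((t - τ) ^ (α - 1) * Real.exp (-(l * (t - τ)))) ≤
          δ ^ α / α := by
        have h1 : ∫ τ in Ioo (t - δ) t, ((t - τ) ^ (α - 1) * Real.exp (-(l * (t - τ)))) ≤
            ∫ τ in Ioo (t - δ) t, (t - τ) ^ (α - 1) := by
          apply setIntegral_mono_on hIb
            ((aux_intOn_refl_rpow hα (by linarith : t - δ ≤ t)).mono_set Ioo_subset_Ioc_self)
            measurableSet_Ioo
          intro τ hτ
          have hh : (0:ℝ) < t - τ := by have := hτ.2; linarith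
          have h3 : Real.exp (-(l * (t - τ))) ≤ 1 := by rw [Real.exp_le_one_iff]; nlinarith
          calc (t - τ) ^ (α - 1) * Real.exp (-(l * (t - τ))) ≤ (t - τ) ^ (α - 1) * 1 :=
                mul_le_mul_of_nonneg_left h3 (by positivity)
            _ = (t - τ) ^ (α - 1) := mul_one _
        have h2 : ∫ τ in Ioo (t - δ) t, (t - τ) ^ (α - 1) = δ ^ α / α := by
          rw [← integral_Ioc_eq_integral_Ioo, aux_int_refl_rpow hα (by linarith : t - δ ≤ t),
            show t - (t - δ) = δ by ring]
        linarith
      linarith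
  -- assembly
  have ht2 : (0:ℝ) < t/2 := by linarith
  have hw : (0:ℝ) ≤ t ^ (1 - η) := Real.rpow_nonneg ht0.le _
  have hpow2 : t ^ (1 - η) * (t/2) ^ (η - 1) = 2 ^ (1 - η) := by
    rw [Real.div_rpow ht0.le (by norm_num : (0:ℝ) ≤ 2)]
    rw [div_eq_mul_inv, ← Real.rpow_neg (by norm_num : (0:ℝ) ≤ 2)]
    rw [show -(η - 1) = 1 - η by ring, ← mul_assoc, ← Real.rpow_add ht0]
    norm_num
  have hpow2le : (2:ℝ) ^ (1 - η) ≤ 2 := by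
    calc (2:ℝ) ^ (1 - η) ≤ 2 ^ (1:ℝ) :=
          Real.rpow_le_rpow_of_exponent_le one_le_two (by linarith)
      _ = 2 := Real.rpow_one 2
  have hehalf : (t/2) ^ α * Real.exp (-(l * (t/2))) ≤ δ ^ α + T ^ α * E := by
    have hTE : 0 ≤ T ^ α * E := by positivity
    have hda : 0 ≤ δ ^ α := Real.rpow_nonneg hδpos.le _
    by_cases hc : t/2 ≤ δ
    · have h1 : (t/2) ^ α ≤ δ ^ α := Real.rpow_le_rpow ht2.le hc hα.le
      have h2 : Real.exp (-(l * (t/2))) ≤ 1 := by rw [Real.exp_le_one_iff]; nlinarith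
      nlinarith [Real.exp_nonneg (-(l * (t/2))), Real.rpow_nonneg ht2.le α]
    · push_neg at hc
      have h1 : (t/2) ^ α ≤ T ^ α := Real.rpow_le_rpow ht2.le (by linarith) hα.le
      have h2 : Real.exp (-(l * (t/2))) ≤ E := hElog _ hc.le
      nlinarith [Real.exp_nonneg (-(l * (t/2))), Real.rpow_nonneg ht2.le α]
  -- put it together
  have hJ1w : t ^ (1 - η) * ∫ τ in Ioc (0:ℝ) (t/2), F τ ≤ 2/η * (δ ^ α + T ^ α * E) := by
    have h0 : t ^ (1 - η) * ∫ τ in Ioc (0:ℝ) (t/2), F τ ≤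
        t ^ (1 - η) * (((t/2) ^ (α - 1) * Real.exp (-(l * (t/2)))) * ((t/2) ^ η / η)) :=
      mul_le_mul_of_nonneg_left hJ1 hw
    have heq : t ^ (1 - η) * (((t/2) ^ (α - 1) * Real.exp (-(l * (t/2)))) * ((t/2) ^ η / η)) =
        (2:ℝ) ^ (1 - η) * ((t/2) ^ α * Real.exp (-(l * (t/2)))) / η := by
      have hx : (t/2) ^ (α - 1) * (t/2) ^ η = (t/2) ^ α * (t/2) ^ (η - 1) := by
        rw [← Real.rpow_add ht2, ← Real.rpow_add ht2]; ring_nf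
      calc t ^ (1 - η) * (((t/2) ^ (α - 1) * Real.exp (-(l * (t/2)))) * ((t/2) ^ η / η))
          = t ^ (1 - η) * ((t/2) ^ (α - 1) * (t/2) ^ η) * Real.exp (-(l * (t/2))) / η := by
            ring
        _ = t ^ (1 - η) * ((t/2) ^ α * (t/2) ^ (η - 1)) * Real.exp (-(l * (t/2))) / η := by
            rw [hx]
        _ = (t ^ (1 - η) * (t/2) ^ (η - 1)) * ((t/2) ^ α * Real.exp (-(l * (t/2)))) / η := by
            ring
        _ = (2:ℝ) ^ (1 - η) * ((t/2) ^ α * Real.exp (-(l * (t/2)))) / η := by rw [hpow2]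
    rw [heq] at h0
    refine h0.trans ?_
    have hmul : (2:ℝ) ^ (1 - η) * ((t/2) ^ α * Real.exp (-(l * (t/2)))) ≤
        2 * (δ ^ α + T ^ α * E) := by
      apply mul_le_mul hpow2le hehalf (by positivity) (by norm_num)
    calc (2:ℝ) ^ (1 - η) * ((t/2) ^ α * Real.exp (-(l * (t/2)))) / η
        ≤ 2 * (δ ^ α + T ^ α * E) / η := by gcongr
      _ = 2/η * (δ ^ α + T ^ α * E) := by ring
  have hJ2w : t ^ (1 - η) * ∫ τ in Ioo (t/2) t, F τ ≤ 2 * (δ ^ α / α + T * δ ^ (α - 1) * E) := by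
    have h0 : t ^ (1 - η) * ∫ τ in Ioo (t/2) t, F τ ≤
        t ^ (1 - η) * ((t/2) ^ (η - 1) *
          ∫ τ in Ioo (t/2) t, ((t - τ) ^ (α - 1) * Real.exp (-(l * (t - τ))))) :=
      mul_le_mul_of_nonneg_left hJ2 hw
    refine h0.trans ?_
    rw [← mul_assoc, hpow2]
    apply mul_le_mul hpow2le hK2 hK2nn (by norm_num)
  have hfin : t ^ (1 - η) * ∫ τ in Ioo (0:ℝ) t, F τ ≤ A * δ ^ α + B * E := by
    rw [hsum, mul_add]
    calc t ^ (1 - η) * (∫ τ in Ioc (0:ℝ) (t/2), F τ) +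
          t ^ (1 - η) * ∫ τ in Ioo (t/2) t, F τ
        ≤ 2/η * (δ ^ α + T ^ α * E) + 2 * (δ ^ α / α + T * δ ^ (α - 1) * E) := by
          linarith
      _ = A * δ ^ α + B * E := by rw [hA, hB]; ring
  have hBE : B * E ≤ ε / 2 := by
    calc B * E ≤ B * (ε / (2*B)) := mul_le_mul_of_nonneg_left hexp hBpos.le
      _ = ε / 2 := by field_simp
  linarith

lemma aux_heatGx_bound {x t ξ s : ℝ} (h : s < t) :
    |heatGx x t ξ s| ≤ |x - ξ| * (t - s)⁻¹ * (t - s) ^ (-(1/2) : ℝ) *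
      Real.exp (-(x - ξ)^2 / (2*(t - s))) := by
  have hts : (0:ℝ) < t - s := by linarith
  unfold heatGx heatG
  rw [abs_mul, abs_mul, abs_neg, abs_div, abs_of_pos hts,
    abs_of_nonneg (inv_nonneg.2 (Real.sqrt_nonneg _)), Real.abs_exp]
  have hsqrt : (t - s) ^ ((1:ℝ)/2) ≤ Real.sqrt (2 * Real.pi * (t - s)) := by
    rw [← Real.sqrt_eq_rpow]
    apply Real.sqrt_le_sqrt
    nlinarith [Real.pi_gt_three]
  have h1 : (Real.sqrt (2 * Real.pi * (t - s)))⁻¹ ≤ (t - s) ^ (-(1/2) : ℝ) := by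
    rw [show (-(1/2) : ℝ) = -(1/2) by norm_num, Real.rpow_neg hts.le]
    exact inv_anti₀ (Real.rpow_pos_of_pos hts _) hsqrt
  have h2 : |x - ξ| / (t - s) * ((Real.sqrt (2 * Real.pi * (t - s)))⁻¹ *
      Real.exp (-(x - ξ) ^ 2 / (2 * (t - s)))) =
      |x - ξ| * (t - s)⁻¹ * (Real.sqrt (2 * Real.pi * (t - s)))⁻¹ *
        Real.exp (-(x - ξ) ^ 2 / (2 * (t - s))) := by ring
  rw [h2]
  gcongr

lemma aux_tend0 {c : ℝ} (hc : 0 < c) :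
    Tendsto (fun t : ℝ => t⁻¹ * t ^ (-(1/2) : ℝ) * Real.exp (-(c / t)))
      (nhdsWithin 0 (Ioi 0)) (nhds 0) := by
  have h := (tendsto_rpow_mul_exp_neg_mul_atTop_nhds_zero (3/2) c hc).comp
    tendsto_inv_nhdsGT_zero
  apply h.congr'
  filter_upwards [self_mem_nhdsWithin] with t ht
  have ht0 : (0:ℝ) < t := ht
  show (t⁻¹) ^ ((3:ℝ)/2) * Real.exp (-c * t⁻¹) = t⁻¹ * t ^ (-(1/2) : ℝ) * Real.exp (-(c / t))
  have h1 : (t⁻¹) ^ ((3:ℝ)/2) = t⁻¹ * t ^ (-(1/2) : ℝ) := by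
    have hx : t⁻¹ * t ^ (-(1/2) : ℝ) = t ^ (-(3/2) : ℝ) := by
      rw [← Real.rpow_neg_one t, ← Real.rpow_add ht0]
      norm_num
    rw [hx, Real.inv_rpow ht0.le, ← Real.rpow_neg ht0.le]
  have h2 : -c * t⁻¹ = -(c / t) := by ring
  rw [h1, h2]

set_option maxHeartbeats 1600000 in
/-- With X locally Hölder of exponent γ ∈ (1/2,1], X 0 = 0,
r₀ < 0, approximating initial data h_n supported in [r₀−1/n, r₀+1/n] with unit
mass, and p_n, p the corresponding solutions of the Volterra equations, p_n → p
in the weighted norm sup_{0<t≤T} t^{1−η}|p_n(t)−p(t)| for every η ∈ (0,1/2) and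
T > 0. -/
theorem approximate_density_convergence (X : ℝ → ℝ) (γ : ℝ)
    (hγ : 1 / 2 < γ ∧ γ ≤ 1) (hX0 : X 0 = 0)
    (hXcont : ContinuousOn X (Set.Ici 0))
    (hHolder : ∀ T > (0:ℝ), ∃ m : ℝ, ∀ s ∈ Set.Icc (0:ℝ) T, ∀ u ∈ Set.Icc (0:ℝ) T,
      |X u - X s| ≤ m * |u - s| ^ γ)
    (r₀ : ℝ) (hr₀ : r₀ < 0)
    (hn : ℕ → ℝ → ℝ)
    (hhn : ∀ n : ℕ, 0 < n → ContDiff ℝ (⊤ : ℕ∞) (hn n) ∧ HasCompactSupport (hn n) ∧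
      (∀ ξ, 0 ≤ hn n ξ) ∧
      tsupport (hn n) ⊆ Set.Icc (r₀ - 1 / n) (r₀ + 1 / n) ∧
      ∫ ξ : ℝ, hn n ξ = 1)
    (pn : ℕ → ℝ → ℝ) (p : ℝ → ℝ)
    (hpncont : ∀ n : ℕ, 0 < n → ContinuousOn (pn n) (Set.Ici 0))
    (hpn : ∀ n : ℕ, 0 < n → ∀ t > (0:ℝ),
      pn n t = -(∫ ξ : ℝ, hn n ξ * heatGx (X t) t ξ 0) +
        ∫ τ in Set.Ioo 0 t, heatGx (X t) t (X τ) τ * pn n τ)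
    (hpcont : ContinuousOn p (Set.Ici 0)) (hp0 : p 0 = 0)
    (hp : ∀ t > (0:ℝ), p t = -heatGx (X t) t r₀ 0 +
      ∫ τ in Set.Ioo 0 t, heatGx (X t) t (X τ) τ * p τ) :
    ∀ η : ℝ, 0 < η → η < 1 / 2 → ∀ T > (0:ℝ),
      Filter.Tendsto
        (fun n : ℕ => ⨆ t : Set.Ioc (0:ℝ) T, (t : ℝ) ^ (1 - η) * |pn n t - p t|)
        Filter.atTop (nhds 0) := by
  intro η hη0 hη2 T hT
  obtain ⟨hγ1, hγ2⟩ := hγ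
  have hπ := Real.pi_gt_three
  set α : ℝ := γ - 1/2 with hαdef
  have hα : 0 < α := by rw [hαdef]; linarith
  have hα1 : α ≤ 1 := by rw [hαdef]; linarith
  have hη1 : η ≤ 1 := by linarith
  obtain ⟨m0, hm0⟩ := hHolder T hT
  set m : ℝ := max m0 0 + 1 with hmdef
  have hm00 : (0:ℝ) ≤ max m0 0 := le_max_right _ _
  have hmpos : (0:ℝ) < m := by rw [hmdef]; linarith
  have hm' : ∀ s ∈ Icc (0:ℝ) T, ∀ u ∈ Icc (0:ℝ) T, |X u - X s| ≤ m * |u - s| ^ γ := by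
    intro s hs u hu
    refine (hm0 s hs u hu).trans ?_
    apply mul_le_mul_of_nonneg_right _ (Real.rpow_nonneg (abs_nonneg _) _)
    have h1 := le_max_left m0 0
    rw [hmdef]; linarith
  -- kernel bound
  have hker : ∀ t τ : ℝ, 0 < τ → τ < t → t ≤ T →
      |heatGx (X t) t (X τ) τ| ≤ m * (t - τ) ^ (α - 1) := by
    intro t τ h0 hτt htT
    have hts : (0:ℝ) < t - τ := by linarith
    refine (aux_heatGx_bound (show τ < t by linarith)).trans ?_
    have hX : |X t - X τ| ≤ m * (t - τ) ^ γ := by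
      have h := hm' τ ⟨h0.le, by linarith⟩ t ⟨by linarith, htT⟩
      rwa [abs_of_pos hts] at h
    have hexp1 : Real.exp (-(X t - X τ)^2 / (2*(t - τ))) ≤ 1 := by
      rw [Real.exp_le_one_iff]
      apply div_nonpos_of_nonpos_of_nonneg (neg_nonpos.2 (sq_nonneg _)) (by linarith)
    have hi : (0:ℝ) ≤ (t - τ)⁻¹ := inv_nonneg.2 hts.le
    have hrp : (0:ℝ) ≤ (t - τ) ^ (-(1/2):ℝ) := Real.rpow_nonneg hts.le _
    have hnn2 : (0:ℝ) ≤ m * (t - τ)^γ * (t - τ)⁻¹ * (t - τ) ^ (-(1/2):ℝ) :=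
      mul_nonneg (mul_nonneg (mul_nonneg hmpos.le (Real.rpow_nonneg hts.le _)) hi) hrp
    calc |X t - X τ| * (t - τ)⁻¹ * (t - τ) ^ (-(1/2):ℝ) *
          Real.exp (-(X t - X τ)^2 / (2*(t-τ)))
        ≤ (m * (t - τ)^γ) * (t - τ)⁻¹ * (t - τ) ^ (-(1/2):ℝ) * 1 := by
          apply mul_le_mul _ hexp1 (Real.exp_nonneg _) hnn2
          exact mul_le_mul_of_nonneg_right (mul_le_mul_of_nonneg_right hX hi) hrp
      _ = m * ((t - τ)^γ * (t - τ)^(-1:ℝ) * (t - τ)^(-(1/2):ℝ)) := by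
          rw [Real.rpow_neg_one]; ring
      _ = m * (t - τ)^(α - 1) := by
          rw [← Real.rpow_add hts, ← Real.rpow_add hts]
          congr 1
          rw [hαdef]; ring
  obtain ⟨l, hl0, hlb⟩ := aux_kal (T := T) (α := α) (η := η) hT hα hα1 hη0 hη1
    (show (0:ℝ) < 1/(2*m) by positivity)
  set cT : ℝ := max T 1 with hcTdef
  have hcT1 : (1:ℝ) ≤ cT := le_max_right _ _
  have hcTpos : (0:ℝ) < cT := by linarith
  have htpow : ∀ t : ℝ, 0 < t → t ≤ T → t ^ (1 - η) ≤ cT := by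
    intro t ht1 ht2
    rcases le_total T 1 with hT1 | hT1
    · calc t^(1-η) ≤ 1 := Real.rpow_le_one ht1.le (by linarith) (by linarith)
        _ ≤ cT := hcT1
    · calc t^(1-η) ≤ T^(1-η) := Real.rpow_le_rpow ht1.le ht2 (by linarith)
        _ ≤ T^(1:ℝ) := Real.rpow_le_rpow_of_exponent_le hT1 (by linarith)
        _ = T := Real.rpow_one T
        _ ≤ cT := le_max_left _ _
  -- the forcing-term estimate
  have hforce : ∀ εg : ℝ, 0 < εg → ∃ N : ℕ, ∀ n' : ℕ, N ≤ n' → 1 ≤ n' →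
      ∀ t ∈ Ioc (0:ℝ) T,
        |heatGx (X t) t r₀ 0 - ∫ ξ : ℝ, hn n' ξ * heatGx (X t) t ξ 0| ≤ εg := by
    intro εg hεg
    set c1 : ℝ := r₀^2/8 with hc1
    set c2 : ℝ := -(3/2) * r₀ with hc2
    have hc1p : 0 < c1 := by
      rw [hc1]; nlinarith [mul_pos (neg_pos.2 hr₀) (neg_pos.2 hr₀)]
    have hc2p : 0 < c2 := by rw [hc2]; linarith
    have hreg : ∀ t ξ : ℝ, 0 < t → |X t| ≤ -r₀/4 → (5/4)*r₀ ≤ ξ → ξ ≤ (3/4)*r₀ →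
        |heatGx (X t) t ξ 0| ≤ c2 * (t⁻¹ * t ^ (-(1/2):ℝ) * Real.exp (-(c1 / t))) := by
      intro t ξ ht hXb h1 h2
      have hb := aux_heatGx_bound (show (0:ℝ) < t from ht) (x := X t) (ξ := ξ)
      rw [sub_zero] at hb
      refine hb.trans ?_
      obtain ⟨hXl, hXr⟩ := abs_le.1 hXb
      have habs : |X t - ξ| ≤ c2 := by
        rw [abs_le, hc2]; constructor <;> nlinarith
      have hsq : c1 / t ≤ (X t - ξ)^2 / (2*t) := by
        rw [div_le_div_iff₀ ht (by linarith)]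
        have h3 : -r₀/2 ≤ X t - ξ := by linarith
        have h4 : r₀^2/4 ≤ (X t - ξ)^2 := by nlinarith
        rw [hc1]; nlinarith [mul_le_mul_of_nonneg_right h4 ht.le]
      have hexp2 : Real.exp (-(X t - ξ)^2/(2*t)) ≤ Real.exp (-(c1/t)) := by
        rw [Real.exp_le_exp, neg_div]; linarith
      calc |X t - ξ| * t⁻¹ * t ^ (-(1/2):ℝ) * Real.exp (-(X t - ξ)^2/(2*t))
          ≤ c2 * t⁻¹ * t ^ (-(1/2):ℝ) * Real.exp (-(c1/t)) := by
            apply mul_le_mul _ hexp2 (Real.exp_nonneg _) (by positivity)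
            gcongr
        _ = c2 * (t⁻¹ * t ^ (-(1/2):ℝ) * Real.exp (-(c1/t))) := by ring
    have hlim : Tendsto (fun t : ℝ => c2 * (t⁻¹ * t ^ (-(1/2):ℝ) * Real.exp (-(c1 / t))))
        (nhdsWithin 0 (Ioi 0)) (nhds 0) := by
      have h := (aux_tend0 hc1p).const_mul c2
      simpa using h
    have hev : ∀ᶠ t in nhdsWithin (0:ℝ) (Ioi 0),
        c2 * (t⁻¹ * t ^ (-(1/2):ℝ) * Real.exp (-(c1 / t))) < εg/2 :=
      hlim.eventually_lt_const (by linarith)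
    obtain ⟨r1, hr1, hball1⟩ := Metric.mem_nhdsWithin_iff.1 hev
    have hX0cont : Tendsto X (nhdsWithin 0 (Ici 0)) (nhds 0) := by
      have h := hXcont 0 self_mem_Ici
      rwa [ContinuousWithinAt, hX0] at h
    have hev2 : ∀ᶠ t in nhdsWithin (0:ℝ) (Ici 0), |X t| < -r₀/4 := by
      have h := Metric.tendsto_nhds.1 hX0cont (-r₀/4) (by linarith)
      simpa [Real.dist_eq] using h
    obtain ⟨r2, hr2, hball2⟩ := Metric.mem_nhdsWithin_iff.1 hev2
    set tstar : ℝ := min (min r1 r2 / 2) T with htstar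
    have htstar0 : 0 < tstar := lt_min (by positivity) hT
    have htstarT : tstar ≤ T := min_le_right _ _
    have hsmall : ∀ t : ℝ, 0 < t → t ≤ tstar → ∀ ξ, (5/4)*r₀ ≤ ξ → ξ ≤ (3/4)*r₀ →
        |heatGx (X t) t ξ 0| ≤ εg/2 := by
      intro t ht htle ξ hξ1 hξ2
      have htm : t ≤ min r1 r2 / 2 := le_trans htle (min_le_left _ _)
      have htr1 : t < r1 := by
        have := min_le_left r1 r2; linarith
      have htr2 : t < r2 := by
        have := min_le_right r1 r2; linarith
      have hx : |X t| ≤ -r₀/4 := by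
        have hm2 : t ∈ Metric.ball (0:ℝ) r2 ∩ Ici 0 := by
          constructor
          · rw [Metric.mem_ball, Real.dist_eq, sub_zero, abs_of_pos ht]; exact htr2
          · exact ht.le
        exact (hball2 hm2).le
      have hm1 : t ∈ Metric.ball (0:ℝ) r1 ∩ Ioi 0 := by
        constructor
        · rw [Metric.mem_ball, Real.dist_eq, sub_zero, abs_of_pos ht]; exact htr1
        · exact ht
      exact (hreg t ξ ht hx hξ1 hξ2).trans (hball1 hm1).le
    -- uniform continuity on the compact region
    have hHcont : ContinuousOn (fun pq : ℝ × ℝ => heatGx (X pq.1) pq.1 pq.2 0)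
        (Icc tstar T ×ˢ Icc (r₀-1) (r₀+1)) := by
      have hfun : (fun pq : ℝ × ℝ => heatGx (X pq.1) pq.1 pq.2 0)
          = fun pq : ℝ × ℝ => -((X pq.1 - pq.2) / pq.1) *
            ((Real.sqrt (2*Real.pi*pq.1))⁻¹ *
              Real.exp (-(X pq.1 - pq.2)^2 / (2*pq.1))) := by
        funext pq; simp [heatGx, heatG]
      rw [hfun]
      have hXp : ContinuousOn (fun pq : ℝ×ℝ => X pq.1) (Icc tstar T ×ˢ Icc (r₀-1) (r₀+1)) :=
        hXcont.comp continuous_fst.continuousOn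
          (fun pq hpq => le_trans htstar0.le hpq.1.1)
      have hfst : ContinuousOn (fun pq : ℝ×ℝ => pq.1) (Icc tstar T ×ˢ Icc (r₀-1) (r₀+1)) :=
        continuous_fst.continuousOn
      have hsnd : ContinuousOn (fun pq : ℝ×ℝ => pq.2) (Icc tstar T ×ˢ Icc (r₀-1) (r₀+1)) :=
        continuous_snd.continuousOn
      have hne : ∀ pq ∈ Icc tstar T ×ˢ Icc (r₀-1) (r₀+1), (pq.1 : ℝ) ≠ 0 :=
        fun pq hpq => ne_of_gt (lt_of_lt_of_le htstar0 hpq.1.1)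
      have hsq : ContinuousOn (fun pq : ℝ×ℝ => (Real.sqrt (2*Real.pi*pq.1))⁻¹)
          (Icc tstar T ×ˢ Icc (r₀-1) (r₀+1)) := by
        apply ContinuousOn.inv₀
        · exact (Real.continuous_sqrt.comp (continuous_const.mul continuous_fst)).continuousOn
        · intro pq hpq
          have hpos : 0 < 2*Real.pi*pq.1 := by
            have h1 := hpq.1.1; nlinarith
          exact ne_of_gt (Real.sqrt_pos.2 hpos)
      have hexp : ContinuousOn (fun pq : ℝ×ℝ => Real.exp (-(X pq.1 - pq.2)^2/(2*pq.1)))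
          (Icc tstar T ×ˢ Icc (r₀-1) (r₀+1)) := by
        apply Real.continuous_exp.comp_continuousOn
        apply ContinuousOn.div
        · exact ((hXp.sub hsnd).pow 2).neg
        · exact (continuous_const.mul continuous_fst).continuousOn
        · intro pq hpq hcon
          exact hne pq hpq (by linarith)
      exact (((hXp.sub hsnd).div hfst hne).neg).mul (hsq.mul hexp)
    have hucont := ((isCompact_Icc.prod isCompact_Icc).uniformContinuousOn_of_continuous hHcont)
    obtain ⟨dlt, hdlt, huc⟩ := Metric.uniformContinuousOn_iff.1 hucont εg hεg
    refine ⟨max (⌈(4:ℝ)/(-r₀)⌉₊ + 1) (⌈1/dlt⌉₊ + 1), ?_⟩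
    intro n hN hn1 t ht
    have hnpos : (0:ℝ) < (n:ℝ) := by exact_mod_cast hn1
    have hn4 : 1/(n:ℝ) ≤ -r₀/4 := by
      have h1 : ((⌈(4:ℝ)/(-r₀)⌉₊ + 1 : ℕ) : ℝ) ≤ n := by
        exact_mod_cast le_trans (le_max_left _ _) hN
      have h2 : (4:ℝ)/(-r₀) ≤ ⌈(4:ℝ)/(-r₀)⌉₊ := Nat.le_ceil _
      push_cast at h1
      have h3 : (4:ℝ)/(-r₀) < (n:ℝ) := by linarith
      rw [div_le_div_iff₀ hnpos (by linarith : (0:ℝ) < 4)]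
      rw [div_lt_iff₀ (by linarith : (0:ℝ) < -r₀)] at h3
      linarith
    have hnd : 1/(n:ℝ) < dlt := by
      have h1 : ((⌈1/dlt⌉₊ + 1 : ℕ) : ℝ) ≤ n := by
        exact_mod_cast le_trans (le_max_right _ _) hN
      have h2 : 1/dlt ≤ ⌈1/dlt⌉₊ := Nat.le_ceil _
      push_cast at h1
      have h3 : 1/dlt < (n:ℝ) := by linarith
      rw [div_lt_iff₀ hnpos]
      rw [div_lt_iff₀ hdlt] at h3
      nlinarith
    have hn11 : 1/(n:ℝ) ≤ 1 := by
      rw [div_le_one hnpos]; exact_mod_cast hn1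
    obtain ⟨hsm, hcs, hposn, hsupp, hintone⟩ := hhn n (by omega)
    have hD : ∀ ξ ∈ tsupport (hn n), |heatGx (X t) t r₀ 0 - heatGx (X t) t ξ 0| ≤ εg := by
      intro ξ hξ
      have hξI := hsupp hξ
      have hξl : r₀ - 1/(n:ℝ) ≤ ξ := hξI.1
      have hξr : ξ ≤ r₀ + 1/(n:ℝ) := hξI.2
      have hξ1 : (5/4)*r₀ ≤ ξ := by linarith
      have hξ2 : ξ ≤ (3/4)*r₀ := by linarith
      rcases le_or_gt t tstar with hcase | hcase
      · have b1 := hsmall t ht.1 hcase r₀ (by linarith) (by linarith)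
        have b2 := hsmall t ht.1 hcase ξ hξ1 hξ2
        calc |heatGx (X t) t r₀ 0 - heatGx (X t) t ξ 0|
            ≤ |heatGx (X t) t r₀ 0| + |heatGx (X t) t ξ 0| := abs_sub _ _
          _ ≤ εg := by linarith
      · have hmem1 : ((t, ξ) : ℝ×ℝ) ∈ Icc tstar T ×ˢ Icc (r₀-1) (r₀+1) :=
          ⟨⟨hcase.le, ht.2⟩, ⟨by linarith, by linarith⟩⟩
        have hmem2 : ((t, r₀) : ℝ×ℝ) ∈ Icc tstar T ×ˢ Icc (r₀-1) (r₀+1) :=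
          ⟨⟨hcase.le, ht.2⟩, ⟨by linarith, by linarith⟩⟩
        have hdist : dist ((t,ξ):ℝ×ℝ) ((t,r₀):ℝ×ℝ) < dlt := by
          rw [Prod.dist_eq]
          apply max_lt
          · simpa [Real.dist_eq] using hdlt
          · rw [Real.dist_eq]
            have : |ξ - r₀| ≤ 1/(n:ℝ) := by
              rw [abs_le]; constructor <;> linarith
            linarith
        have h := huc _ hmem1 _ hmem2 hdist
        rw [Real.dist_eq] at h
        rw [abs_sub_comm]
        exact h.le
    have hFcont : Continuous (fun ξ : ℝ => heatGx (X t) t ξ 0) := by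
      have hfun : (fun ξ : ℝ => heatGx (X t) t ξ 0)
          = fun ξ : ℝ => -((X t - ξ) / t) * ((Real.sqrt (2*Real.pi*t))⁻¹ *
              Real.exp (-(X t - ξ)^2 / (2*t))) := by
        funext ξ; simp [heatGx, heatG]
      rw [hfun]
      exact (((continuous_const.sub continuous_id).div_const t).neg).mul
        (continuous_const.mul (Real.continuous_exp.comp
          (((continuous_const.sub continuous_id).pow 2).neg.div_const (2*t))))
    have hintc : Integrable (hn n) := hsm.continuous.integrable_of_hasCompactSupport hcs
    have hint1 : Integrable (fun ξ : ℝ => hn n ξ * heatGx (X t) t ξ 0) :=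
      (hsm.continuous.mul hFcont).integrable_of_hasCompactSupport (hcs.mul_right)
    have heqg : heatGx (X t) t r₀ 0 - ∫ ξ : ℝ, hn n ξ * heatGx (X t) t ξ 0
        = ∫ ξ : ℝ, hn n ξ * (heatGx (X t) t r₀ 0 - heatGx (X t) t ξ 0) := by
      have hf : (fun ξ : ℝ => hn n ξ * (heatGx (X t) t r₀ 0 - heatGx (X t) t ξ 0))
          = fun ξ => hn n ξ * heatGx (X t) t r₀ 0 - hn n ξ * heatGx (X t) t ξ 0 := by
        funext ξ; ring
      rw [hf, integral_sub (hintc.mul_const _) hint1, integral_mul_const, hintone, one_mul]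
    rw [heqg]
    have hbound : ‖∫ ξ : ℝ, hn n ξ * (heatGx (X t) t r₀ 0 - heatGx (X t) t ξ 0)‖ ≤
        ∫ ξ : ℝ, hn n ξ * εg := by
      apply norm_integral_le_of_norm_le (hintc.mul_const εg)
      apply Eventually.of_forall
      intro ξ
      rw [Real.norm_eq_abs, abs_mul, abs_of_nonneg (hposn ξ)]
      by_cases hmem : ξ ∈ tsupport (hn n)
      · exact mul_le_mul_of_nonneg_left (hD ξ hmem) (hposn ξ)
      · rw [image_eq_zero_of_notMem_tsupport hmem]
        simp
    rw [Real.norm_eq_abs] at hbound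
    refine hbound.trans ?_
    rw [integral_mul_const, hintone, one_mul]
  -- ===== main convergence argument =====
  rw [Metric.tendsto_atTop]
  intro ε hε
  have hD0 : (0:ℝ) < 8 * cT * Real.exp (l * T) + 1 := by positivity
  set εg : ℝ := ε / (8 * cT * Real.exp (l * T) + 1) with hεgdef
  have hεg : 0 < εg := by positivity
  obtain ⟨N0, hN0⟩ := hforce εg hεg
  refine ⟨max N0 1, fun n hn' => ?_⟩
  have hn1 : 1 ≤ n := le_trans (le_max_right _ _) hn'
  have hnN0 : N0 ≤ n := le_trans (le_max_left _ _) hn'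
  have hnpos : 0 < n := hn1
  set q : ℝ → ℝ := fun t => pn n t - p t with hq
  have hqcont : ContinuousOn q (Icc 0 T) :=
    ((hpncont n hnpos).sub hpcont).mono (fun x hx => hx.1)
  obtain ⟨Cq, hCq⟩ := isCompact_Icc.exists_bound_of_continuousOn hqcont
  have hCq' : ∀ t ∈ Icc (0:ℝ) T, |q t| ≤ max Cq 0 := by
    intro t ht
    exact le_trans (by simpa [Real.norm_eq_abs] using hCq t ht) (le_max_left _ _)
  set w : ℝ → ℝ := fun t => Real.exp (-(l * t)) * (t ^ (1-η) * |q t|) with hw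
  haveI hnemp : Nonempty (Ioc (0:ℝ) T) := ⟨⟨T, by constructor <;> linarith⟩⟩
  have hexple1 : ∀ t : ℝ, 0 ≤ t → Real.exp (-(l * t)) ≤ 1 := by
    intro t ht
    rw [Real.exp_le_one_iff]
    nlinarith
  have hwbdd : BddAbove (range (fun t : Ioc (0:ℝ) T => w t)) := by
    refine ⟨cT * max Cq 0, ?_⟩
    rintro x ⟨⟨t, ht⟩, rfl⟩
    show w t ≤ cT * max Cq 0
    rw [hw]
    have h1 := hexple1 t ht.1.le
    have h2 := htpow t ht.1 ht.2
    have h3 := hCq' t ⟨ht.1.le, ht.2⟩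
    have h4 : (0:ℝ) ≤ t ^ (1-η) := Real.rpow_nonneg ht.1.le _
    calc Real.exp (-(l * t)) * (t ^ (1-η) * |q t|)
        ≤ 1 * (t ^ (1-η) * |q t|) := by
          apply mul_le_mul_of_nonneg_right h1 (by positivity)
      _ = t ^ (1-η) * |q t| := one_mul _
      _ ≤ cT * max Cq 0 :=
          mul_le_mul h2 h3 (abs_nonneg _) hcTpos.le
  set M : ℝ := ⨆ t : Ioc (0:ℝ) T, w t with hMdef
  have hwM : ∀ t (ht : t ∈ Ioc (0:ℝ) T), w t ≤ M := fun t ht =>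
    le_ciSup hwbdd (⟨t, ht⟩ : Ioc (0:ℝ) T)
  have hM0 : 0 ≤ M := by
    refine le_trans ?_ (hwM T ⟨hT, le_refl T⟩)
    rw [hw]; positivity
  -- central estimate
  have hcentral : ∀ t, t ∈ Ioc (0:ℝ) T → w t ≤ cT * εg + M / 2 := by
    intro t ht
    obtain ⟨ht0, htT⟩ := ht
    have hKcont : ContinuousOn (fun τ => heatGx (X t) t (X τ) τ) (Ioo 0 t) := by
      have hfun : (fun τ : ℝ => heatGx (X t) t (X τ) τ)
          = fun τ : ℝ => -((X t - X τ) / (t - τ)) * ((Real.sqrt (2*Real.pi*(t - τ)))⁻¹ *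
              Real.exp (-(X t - X τ)^2 / (2*(t - τ)))) := by
        funext τ; simp [heatGx, heatG]
      rw [hfun]
      have hXτ : ContinuousOn (fun τ : ℝ => X τ) (Ioo 0 t) :=
        hXcont.mono (fun τ hτ => hτ.1.le)
      have hsub : ContinuousOn (fun τ : ℝ => t - τ) (Ioo 0 t) :=
        (continuous_const.sub continuous_id).continuousOn
      have hne : ∀ τ ∈ Ioo (0:ℝ) t, t - τ ≠ 0 := by
        intro τ hτ; have := hτ.2; intro hcon; nlinarith [sub_eq_zero.mp hcon]
      have hsqc : ContinuousOn (fun τ : ℝ => (Real.sqrt (2*Real.pi*(t - τ)))⁻¹) (Ioo 0 t) := by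
        apply ContinuousOn.inv₀
        · exact (Real.continuous_sqrt.comp
            (continuous_const.mul (continuous_const.sub continuous_id))).continuousOn
        · intro τ hτ
          have h2 : 0 < 2*Real.pi*(t - τ) := by have := hτ.2; nlinarith
          exact ne_of_gt (Real.sqrt_pos.2 h2)
      have hexpc : ContinuousOn
          (fun τ : ℝ => Real.exp (-(X t - X τ)^2 / (2*(t - τ)))) (Ioo 0 t) := by
        apply Real.continuous_exp.comp_continuousOn
        apply ContinuousOn.div
        · exact ((continuousOn_const.sub hXτ).pow 2).neg
        · exact (continuous_const.mul (continuous_const.sub continuous_id)).continuousOn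
        · intro τ hτ hcon
          exact hne τ hτ (by linarith)
      exact (((continuousOn_const.sub hXτ).div hsub hne).neg).mul (hsqc.mul hexpc)
    obtain ⟨Cpn, hCpn⟩ := isCompact_Icc.exists_bound_of_continuousOn
      ((hpncont n hnpos).mono (fun x (hx : x ∈ Icc (0:ℝ) T) => hx.1))
    obtain ⟨Cp, hCp⟩ := isCompact_Icc.exists_bound_of_continuousOn
      (hpcont.mono (fun x (hx : x ∈ Icc (0:ℝ) T) => hx.1))
    have hIOn : ∀ g : ℝ → ℝ, ContinuousOn g (Ioo 0 t) → (∀ τ ∈ Ioo (0:ℝ) t, |g τ| ≤ max Cpn 0 + max Cp 0) →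
        IntegrableOn (fun τ => heatGx (X t) t (X τ) τ * g τ) (Ioo 0 t) := by
      intro g hgc hgb
      apply Integrable.mono'
        (((aux_intOn_refl_rpow hα ht0.le).mono_set Ioo_subset_Ioc_self).const_mul
          (m * (max Cpn 0 + max Cp 0)))
      · exact (hKcont.mul hgc).aestronglyMeasurable measurableSet_Ioo
      · rw [ae_restrict_iff' measurableSet_Ioo]
        apply Eventually.of_forall
        intro τ hτ
        rw [Real.norm_eq_abs, abs_mul]
        calc |heatGx (X t) t (X τ) τ| * |g τ|
            ≤ (m * (t - τ)^(α-1)) * (max Cpn 0 + max Cp 0) := by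
              apply mul_le_mul (hker t τ hτ.1 hτ.2 htT) (hgb τ hτ) (abs_nonneg _)
              have h1 : (0:ℝ) < t - τ := by have := hτ.2; linarith
              positivity
          _ = m * (max Cpn 0 + max Cp 0) * ((t - τ)^(α-1)) := by ring
    have hIpn : IntegrableOn (fun τ => heatGx (X t) t (X τ) τ * pn n τ) (Ioo 0 t) := by
      apply hIOn _ ((hpncont n hnpos).mono (fun τ hτ => hτ.1.le))
      intro τ hτ
      have h1 := hCpn τ ⟨hτ.1.le, le_trans hτ.2.le htT⟩
      rw [Real.norm_eq_abs] at h1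
      have h2 : (0:ℝ) ≤ max Cp 0 := le_max_right _ _
      have h3 : Cpn ≤ max Cpn 0 := le_max_left _ _
      linarith
    have hIp : IntegrableOn (fun τ => heatGx (X t) t (X τ) τ * p τ) (Ioo 0 t) := by
      apply hIOn _ (hpcont.mono (fun τ hτ => hτ.1.le))
      intro τ hτ
      have h1 := hCp τ ⟨hτ.1.le, le_trans hτ.2.le htT⟩
      rw [Real.norm_eq_abs] at h1
      have h2 : (0:ℝ) ≤ max Cpn 0 := le_max_right _ _
      have h3 : Cp ≤ max Cp 0 := le_max_left _ _
      linarith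
    have heqq : q t = (heatGx (X t) t r₀ 0 - ∫ ξ : ℝ, hn n ξ * heatGx (X t) t ξ 0)
        + ∫ τ in Ioo (0:ℝ) t, heatGx (X t) t (X τ) τ * q τ := by
      have e1 := hpn n hnpos t ht0
      have e2 := hp t ht0
      have e3 : ∫ τ in Ioo (0:ℝ) t, heatGx (X t) t (X τ) τ * q τ
          = (∫ τ in Ioo (0:ℝ) t, heatGx (X t) t (X τ) τ * pn n τ)
            - ∫ τ in Ioo (0:ℝ) t, heatGx (X t) t (X τ) τ * p τ := by
        rw [← integral_sub hIpn hIp]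
        congr 1
        funext τ
        simp only [hq]
        ring
      simp only [hq]
      rw [e1, e2, e3]
      ring
    -- bound |q τ| by the weighted sup
    have hqτ : ∀ τ, τ ∈ Ioo (0:ℝ) t → |q τ| ≤ M * (Real.exp (l * τ) * τ ^ (η - 1)) := by
      intro τ hτ
      have h0τ : (0:ℝ) < τ := hτ.1
      have hτT : τ ∈ Ioc (0:ℝ) T := ⟨h0τ, le_trans hτ.2.le htT⟩
      have he : Real.exp (l*τ) * Real.exp (-(l*τ)) = 1 := by
        rw [← Real.exp_add]; simp
      have hr : τ^(η-1) * τ^(1-η) = 1 := by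
        rw [← Real.rpow_add h0τ]; norm_num
      have hkey : |q τ| = (Real.exp (l*τ) * τ^(η-1)) * w τ := by
        rw [hw]
        calc |q τ| = ((Real.exp (l*τ) * Real.exp (-(l*τ))) * (τ^(η-1) * τ^(1-η))) * |q τ| := by
              rw [he, hr]; ring
          _ = (Real.exp (l*τ) * τ^(η-1)) * (Real.exp (-(l * τ)) * (τ ^ (1-η) * |q τ|)) := by
              ring
      rw [hkey]
      calc (Real.exp (l*τ) * τ^(η-1)) * w τ ≤ (Real.exp (l*τ) * τ^(η-1)) * M := by
            apply mul_le_mul_of_nonneg_left (hwM τ hτT) (by positivity)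
        _ = M * (Real.exp (l * τ) * τ ^ (η - 1)) := by ring
    -- the convolution bound
    have hDint : IntegrableOn (fun τ => (m * (M * Real.exp (l * t))) *
        ((t-τ)^(α-1) * τ^(η-1) * Real.exp (-(l*(t-τ))))) (Ioo 0 t) :=
      (aux_intOn_F hα hα1 hη0 hη1 ht0 hl0).const_mul _
    have hIqK : |∫ τ in Ioo (0:ℝ) t, heatGx (X t) t (X τ) τ * q τ| ≤
        (m * (M * Real.exp (l * t))) * ∫ τ in Ioo (0:ℝ) t,
          ((t-τ)^(α-1) * τ^(η-1) * Real.exp (-(l*(t-τ)))) := by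
      rw [← MeasureTheory.integral_const_mul, ← Real.norm_eq_abs]
      apply norm_integral_le_of_norm_le hDint
      rw [ae_restrict_iff' measurableSet_Ioo]
      apply Eventually.of_forall
      intro τ hτ
      have h0τ : (0:ℝ) < τ := hτ.1
      have hτt : τ < t := hτ.2
      have hts : (0:ℝ) < t - τ := by linarith
      rw [Real.norm_eq_abs, abs_mul]
      have h1 := hker t τ h0τ hτt htT
      have h2 := hqτ τ hτ
      have hexpid : Real.exp (l * τ) = Real.exp (l * t) * Real.exp (-(l * (t - τ))) := by
        rw [← Real.exp_add]
        congr 1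
        ring
      calc |heatGx (X t) t (X τ) τ| * |q τ|
          ≤ (m * (t-τ)^(α-1)) * (M * (Real.exp (l*τ) * τ^(η-1))) :=
            mul_le_mul h1 h2 (abs_nonneg _) (by positivity)
        _ = (m * (M * Real.exp (l*t))) * ((t-τ)^(α-1) * τ^(η-1) * Real.exp (-(l*(t-τ)))) := by
            rw [hexpid]; ring
    -- conclude the central estimate
    have hgd : |heatGx (X t) t r₀ 0 - ∫ ξ : ℝ, hn n ξ * heatGx (X t) t ξ 0| ≤ εg :=
      hN0 n hnN0 hn1 t ⟨ht0, htT⟩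
    have hqt : |q t| ≤ εg + (m * (M * Real.exp (l * t))) * ∫ τ in Ioo (0:ℝ) t,
        ((t-τ)^(α-1) * τ^(η-1) * Real.exp (-(l*(t-τ)))) := by
      rw [heqq]
      refine (abs_add_le _ _).trans ?_
      exact add_le_add hgd hIqK
    have hIFnn : 0 ≤ ∫ τ in Ioo (0:ℝ) t,
        ((t-τ)^(α-1) * τ^(η-1) * Real.exp (-(l*(t-τ)))) := by
      apply setIntegral_nonneg measurableSet_Ioo
      intro τ hτ
      have h1 : (0:ℝ) < t - τ := by have := hτ.2; linarith
      have h2 : (0:ℝ) < τ := hτ.1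
      positivity
    have hlbt := hlb t ⟨ht0, htT⟩
    have heee : Real.exp (-(l*t)) * Real.exp (l*t) = 1 := by
      rw [← Real.exp_add]; simp
    have hterm2 : Real.exp (-(l*t)) * (t^(1-η) * ((m * (M * Real.exp (l * t))) *
        ∫ τ in Ioo (0:ℝ) t, ((t-τ)^(α-1) * τ^(η-1) * Real.exp (-(l*(t-τ)))))) ≤ M / 2 := by
      have hid : Real.exp (-(l*t)) * (t^(1-η) * ((m * (M * Real.exp (l * t))) *
          ∫ τ in Ioo (0:ℝ) t, ((t-τ)^(α-1) * τ^(η-1) * Real.exp (-(l*(t-τ)))))) =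
          (m*M) * (t^(1-η) * ∫ τ in Ioo (0:ℝ) t,
            ((t-τ)^(α-1) * τ^(η-1) * Real.exp (-(l*(t-τ))))) := by
        calc Real.exp (-(l*t)) * (t^(1-η) * ((m * (M * Real.exp (l * t))) *
            ∫ τ in Ioo (0:ℝ) t, ((t-τ)^(α-1) * τ^(η-1) * Real.exp (-(l*(t-τ)))))) =
            (Real.exp (-(l*t)) * Real.exp (l*t)) * ((m*M) * (t^(1-η) *
              ∫ τ in Ioo (0:ℝ) t, ((t-τ)^(α-1) * τ^(η-1) * Real.exp (-(l*(t-τ)))))) := by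
              ring
          _ = (m*M) * (t^(1-η) * ∫ τ in Ioo (0:ℝ) t,
              ((t-τ)^(α-1) * τ^(η-1) * Real.exp (-(l*(t-τ))))) := by
              rw [heee]; ring
      rw [hid]
      calc (m*M) * (t^(1-η) * ∫ τ in Ioo (0:ℝ) t,
            ((t-τ)^(α-1) * τ^(η-1) * Real.exp (-(l*(t-τ))))) ≤ (m*M) * (1/(2*m)) := by
            apply mul_le_mul_of_nonneg_left hlbt (by positivity)
        _ = M / 2 := by field_simp
    -- assemble
    rw [hw]
    have hexp1 := hexple1 t ht0.le
    have hpw := htpow t ht0 htT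
    have hstep : Real.exp (-(l * t)) * (t ^ (1-η) * |q t|) ≤
        Real.exp (-(l*t)) * (t^(1-η) * εg) +
        Real.exp (-(l*t)) * (t^(1-η) * ((m * (M * Real.exp (l * t))) *
          ∫ τ in Ioo (0:ℝ) t, ((t-τ)^(α-1) * τ^(η-1) * Real.exp (-(l*(t-τ)))))) := by
      have h1 : t ^ (1-η) * |q t| ≤ t^(1-η) * εg + t^(1-η) * ((m * (M * Real.exp (l * t))) *
          ∫ τ in Ioo (0:ℝ) t, ((t-τ)^(α-1) * τ^(η-1) * Real.exp (-(l*(t-τ))))) := by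
        rw [← mul_add]
        apply mul_le_mul_of_nonneg_left hqt (Real.rpow_nonneg ht0.le _)
      calc Real.exp (-(l * t)) * (t ^ (1-η) * |q t|)
          ≤ Real.exp (-(l * t)) * (t^(1-η) * εg + t^(1-η) * ((m * (M * Real.exp (l * t))) *
              ∫ τ in Ioo (0:ℝ) t, ((t-τ)^(α-1) * τ^(η-1) * Real.exp (-(l*(t-τ)))))) :=
            mul_le_mul_of_nonneg_left h1 (Real.exp_nonneg _)
        _ = _ := by ring
    refine hstep.trans ?_
    have hterm1 : Real.exp (-(l*t)) * (t^(1-η) * εg) ≤ cT * εg := by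
      calc Real.exp (-(l*t)) * (t^(1-η) * εg) ≤ 1 * (t^(1-η) * εg) := by
            apply mul_le_mul_of_nonneg_right hexp1 (by positivity)
        _ = t^(1-η) * εg := one_mul _
        _ ≤ cT * εg := mul_le_mul_of_nonneg_right hpw hεg.le
    linarith
  -- finish: bound the sup and compare with ε
  have hMle : M ≤ cT * εg + M / 2 := by
    rw [hMdef]
    apply ciSup_le
    rintro ⟨t, ht⟩
    exact hcentral t ht
  have hM2 : M ≤ 2 * cT * εg := by linarith
  have hSbdd : BddAbove (range fun t : Ioc (0:ℝ) T => (t:ℝ)^(1-η) * |pn n t - p t|) := by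
    refine ⟨cT * max Cq 0, ?_⟩
    rintro x ⟨⟨t, ht⟩, rfl⟩
    show (t:ℝ)^(1-η) * |pn n t - p t| ≤ cT * max Cq 0
    have h2 := htpow t ht.1 ht.2
    have h3 := hCq' t ⟨ht.1.le, ht.2⟩
    rw [hq] at h3
    exact mul_le_mul h2 h3 (abs_nonneg _) hcTpos.le
  have hSle : (⨆ t : Ioc (0:ℝ) T, (t:ℝ)^(1-η) * |pn n t - p t|) ≤ Real.exp (l*T) * M := by
    apply ciSup_le
    rintro ⟨t, ht⟩
    show (t:ℝ)^(1-η) * |pn n t - p t| ≤ Real.exp (l*T) * M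
    have heee : Real.exp (l*t) * Real.exp (-(l*t)) = 1 := by
      rw [← Real.exp_add]; simp
    have hkey : (t:ℝ)^(1-η) * |pn n t - p t| = Real.exp (l*t) * w t := by
      rw [hw, hq]
      calc (t:ℝ)^(1-η) * |pn n t - p t|
          = (Real.exp (l*t) * Real.exp (-(l*t))) * ((t:ℝ)^(1-η) * |pn n t - p t|) := by
            rw [heee]; ring
        _ = Real.exp (l*t) * (Real.exp (-(l * t)) * ((t:ℝ) ^ (1-η) * |pn n t - p t|)) := by
            ring
    rw [hkey]
    have h1 : Real.exp (l*t) ≤ Real.exp (l*T) := by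
      rw [Real.exp_le_exp]
      nlinarith [ht.2]
    have h2 := hwM t ht
    have ht1 := ht.1
    have h3 : 0 ≤ w t := by simp only [hw]; positivity
    exact mul_le_mul h1 h2 h3 (Real.exp_nonneg _)
  have hS0 : 0 ≤ ⨆ t : Ioc (0:ℝ) T, (t:ℝ)^(1-η) * |pn n t - p t| := by
    refine le_trans ?_ (le_ciSup hSbdd (⟨T, ⟨hT, le_refl T⟩⟩ : Ioc (0:ℝ) T))
    exact mul_nonneg (Real.rpow_nonneg hT.le _) (abs_nonneg _)
  rw [Real.dist_eq, sub_zero, abs_of_nonneg hS0]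
  have hfin : Real.exp (l*T) * M ≤ Real.exp (l*T) * (2 * cT * εg) :=
    mul_le_mul_of_nonneg_left hM2 (Real.exp_nonneg _)
  have hlast : Real.exp (l*T) * (2 * cT * εg) < ε := by
    rw [hεgdef]
    rw [show Real.exp (l*T) * (2 * cT * (ε / (8 * cT * Real.exp (l * T) + 1))) =
        (2 * cT * Real.exp (l*T) * ε) / (8 * cT * Real.exp (l * T) + 1) by ring]
    rw [div_lt_iff₀ hD0]
    nlinarith [Real.exp_pos (l*T)]
  calc (⨆ t : Ioc (0:ℝ) T, (t:ℝ)^(1-η) * |pn n t - p t|)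
      ≤ Real.exp (l*T) * M := hSle
    _ ≤ Real.exp (l*T) * (2 * cT * εg) := hfin
    _ < ε := hlast
end
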